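/- arXiv:2604.13578 — 7 statements merged into one kernel-verified Lean document; each statement's English description precedes it below -/
import Mathlib

section
/- Let 1 ≤ k ≤ n be an integer and let λ ∈ Γ_k. Then σ_{k-1}(λ|i) > 0 for every index 1 ≤ i ≤ n. -/
/-- The `k`-th elementary symmetric function of `x` restricted to the index set `s`. -/
noncomputable def sigmaEOn {ι : Type*} [DecidableEq ι] (s : Finset ι) (k : ℕ) (x : ι → ℝ) : ℝ :=
  ∑ t ∈ s.powersetCard k, ∏ i ∈ t, x i

/-- The `k`-th elementary symmetric function `σ_k(x)`. -/
noncomputable def sigmaE {ι : Type*} [Fintype ι] [DecidableEq ι] (k : ℕ) (x : ι → ℝ) : ℝ :=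
  sigmaEOn Finset.univ k x

/-- The Gårding cone `Γ_k ⊆ ℝ^n`. -/
def gardingCone (n k : ℕ) : Set (Fin n → ℝ) :=
  {lam | ∀ j : ℕ, 1 ≤ j → j ≤ k → 0 < sigmaE j lam}

/-!
Write `λ = λ_i ::ₘ A`, so that `σ_{k+1}(λ) = σ_{k+1}(A) + λ_i σ_k(A)`, and show `σ_k(A) > 0` for
`λ ∈ Γ_{k+1}` by strong induction on `k`.

First, `σ_k(A) ≠ 0`: otherwise `σ_{k+1}(A) = σ_{k+1}(λ) > 0`, and for real numbers the sign pattern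
`σ_r > 0` (`r < k`), `σ_k = 0`, `σ_{k+1} > 0` is impossible. Indeed, by Rolle the roots of the
derivative of `∏ (X - a)` form a multiset with one element fewer whose `σ_r` are positive multiples
of those of `A`; this reduces to `|A| = k + 1`, where all coefficients of `∏ (X + a)` are
nonnegative and the constant one is positive, so every `a > 0` and `σ_k(A) > 0`.

Second, `λ + t` stays in `Γ_{k+1}` for `t ≥ 0`, because `σ_j(λ + t)` is a polynomial in `t` whose
coefficients are nonnegative multiples of `σ_r(λ)`, `r ≤ j`. So `t ↦ σ_k(A + t)` is continuous and
nonvanishing on `[0, ∞)`, and positive once all entries of `A + t` are; hence it is positive at `0`.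
-/

open Polynomial

namespace Polynomial

theorem card_roots_derivative_eq_natDegree {p : ℝ[X]} (hp : p.roots.card = p.natDegree) :
    p.derivative.roots.card = p.derivative.natDegree := by
  have := card_roots_le_derivative p
  have := card_roots' p.derivative
  rw [natDegree_derivative] at *
  omega

end Polynomial

namespace Multiset

section CommSemiring

variable {R : Type*} [CommSemiring R]

@[simp]
theorem esymm_zero (s : Multiset R) : s.esymm 0 = 1 := by
  simp [esymm]

theorem esymm_eq_zero_of_card_lt {s : Multiset R} {k : ℕ} (h : card s < k) : s.esymm k = 0 := by
  simp [esymm, powersetCard_eq_empty _ h]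

theorem esymm_cons_succ (a : R) (s : Multiset R) (k : ℕ) :
    (a ::ₘ s).esymm (k + 1) = s.esymm (k + 1) + a * s.esymm k := by
  simp [esymm, powersetCard_cons, sum_map_mul_left]

end CommSemiring

theorem esymm_map_add_const {R : Type*} [CommRing R] (s : Multiset R) (t : R) {k : ℕ}
    (hk : k ≤ card s) :
    (s.map (· + t)).esymm k = ∑ j ∈ Finset.range (card s + 1),
      s.esymm j * t ^ (card s - j - (card s - k)) * (card s - j).choose (card s - k) := by
  have hpoly : ((s.map (· + t)).map fun a => X + C a).prod
      = ∑ j ∈ Finset.range (card s + 1), C (s.esymm j) * (X + C t) ^ (card s - j) := by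
    calc ((s.map (· + t)).map fun a => X + C a).prod
        = (s.map fun a => aeval (X + C t) (X + C a)).prod := by
          rw [map_map]
          refine congrArg prod (map_congr rfl fun a _ => ?_)
          simp [algebraMap_eq]
          ring
      _ = aeval (X + C t) ((s.map fun a => X + C a).prod) := by
          rw [map_multiset_prod, map_map]; rfl
      _ = _ := by simp [prod_X_add_C_eq_sum_esymm, algebraMap_eq]
  have hcoeff := prod_X_add_C_coeff (s.map (· + t)) (k := card s - k) (by simp)
  rw [card_map, Nat.sub_sub_self hk, hpoly] at hcoeff
  rw [← hcoeff, finsetSum_coeff]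
  refine Finset.sum_congr rfl fun j _ => ?_
  rw [coeff_C_mul, coeff_X_add_C_pow, mul_assoc]

theorem esymm_pos {s : Multiset ℝ} (hs : ∀ a ∈ s, 0 < a) {k : ℕ} (hk : k ≤ card s) :
    0 < s.esymm k := by
  induction s using Multiset.induction generalizing k with
  | empty => simp_all
  | cons a s ih =>
    obtain _ | k := k
    · simp
    rw [esymm_cons_succ]
    have hs' : ∀ b ∈ s, 0 < b := fun b hb => hs b (mem_cons_of_mem hb)
    have hk' : k ≤ card s := by simpa using hk
    have hrest : 0 ≤ s.esymm (k + 1) := by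
      rcases le_or_gt (k + 1) (card s) with h | h
      · exact (ih hs' h).le
      · rw [esymm_eq_zero_of_card_lt h]
    exact add_pos_of_nonneg_of_pos hrest (mul_pos (hs a (mem_cons_self a s)) (ih hs' hk'))

theorem esymm_map_add_pos {s : Multiset ℝ} {k : ℕ} (hle : ∀ j ≤ k, 0 ≤ s.esymm j)
    (hk : 0 < s.esymm k) {t : ℝ} (ht : 0 ≤ t) : 0 < (s.map (· + t)).esymm k := by
  have hks : k ≤ card s := by
    by_contra! h
    exact hk.ne' (esymm_eq_zero_of_card_lt h)
  rw [esymm_map_add_const s t hks]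
  refine Finset.sum_pos' (fun j hjs => ?_) ⟨k, Finset.mem_range.2 (by omega), by simpa using hk⟩
  rcases le_or_gt j k with hj | hj
  · have := hle j hj
    positivity
  · have := Finset.mem_range.1 hjs
    rw [Nat.choose_eq_zero_of_lt (by omega), Nat.cast_zero, mul_zero]

theorem forall_pos_of_esymm_nonneg {s : Multiset ℝ} (hs : ∀ j < card s, 0 ≤ s.esymm j)
    (hcard : 0 < s.esymm (card s)) : ∀ a ∈ s, 0 < a := by
  intro a ha
  by_contra! ha'
  have hzero : ((s.map fun b => X + C b).prod).eval (-a) = 0 := by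
    rw [eval_multiset_prod]
    exact prod_eq_zero (mem_map.2 ⟨_, mem_map_of_mem _ ha, by simp⟩)
  have hpos : 0 < ((s.map fun b => X + C b).prod).eval (-a) := by
    rw [prod_X_add_C_eq_sum_esymm, eval_finsetSum, Finset.sum_range_succ]
    have hlower : 0 ≤ ∑ j ∈ Finset.range (card s), (C (s.esymm j) * X ^ (card s - j)).eval (-a) :=
      Finset.sum_nonneg fun j hj => by
        have := hs j (Finset.mem_range.1 hj)
        simp only [eval_mul, eval_C, eval_pow, eval_X]
        have : 0 ≤ -a := by linarith
        positivity
    simpa using add_pos_of_nonneg_of_pos hlower hcard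
  exact hpos.ne' hzero

theorem exists_esymm_eq_mul_esymm {s : Multiset ℝ} (hs : s ≠ 0) :
    ∃ s' : Multiset ℝ, card s' + 1 = card s ∧
      ∀ r < card s, s'.esymm r = (card s - r) / card s * s.esymm r := by
  set p : ℝ[X] := (s.map fun a => X - C a).prod
  have hdeg : p.natDegree = card s := natDegree_multiset_prod_X_sub_C_eq_card s
  have hroots_eq : p.roots = s := roots_multiset_prod_X_sub_C s
  have hroots : card p.roots = p.natDegree := by rw [hroots_eq, hdeg]
  have hlead : p.leadingCoeff = 1 :=
    (monic_multiset_prod_of_monic _ _ fun a _ => monic_X_sub_C a).leadingCoeff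
  have hcard : 0 < card s := card_pos.2 hs
  refine ⟨p.derivative.roots, ?_, fun r hr => ?_⟩
  · rw [card_roots_derivative_eq_natDegree hroots, natDegree_derivative, hdeg]
    omega
  · have h1 := coeff_eq_esymm_roots_of_card hroots (k := card s - r) (by omega)
    have h2 := coeff_eq_esymm_roots_of_card (card_roots_derivative_eq_natDegree hroots)
      (k := card s - 1 - r) (by rw [natDegree_derivative]; omega)
    rw [coeff_derivative] at h2
    simp only [natDegree_derivative, leadingCoeff_derivative, hdeg, hlead,
      hroots_eq, show card s - 1 - r + 1 = card s - r by omega,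
      show card s - (card s - r) = r by omega,
      show card s - 1 - (card s - 1 - r) = r by omega] at h1 h2
    rw [h1, Nat.cast_sub (by omega), Nat.cast_sub (by omega)] at h2
    have hm : (card s : ℝ) ≠ 0 := by positivity
    field_simp
    refine mul_left_cancel₀ (pow_ne_zero r (neg_ne_zero.2 one_ne_zero)) ?_
    linear_combination -h2

theorem esymm_ne_zero_of_esymm_succ_pos {s : Multiset ℝ} {j : ℕ} (hlt : ∀ r < j, 0 < s.esymm r)
    (hsucc : 0 < s.esymm (j + 1)) : s.esymm j ≠ 0 := by
  have hcard : j + 1 ≤ card s := by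
    by_contra! h
    exact hsucc.ne' (esymm_eq_zero_of_card_lt h)
  obtain ⟨d, hd⟩ := Nat.exists_eq_add_of_le hcard
  clear hcard
  induction d generalizing s with
  | zero =>
    intro hj
    have hnonneg : ∀ r < card s, 0 ≤ s.esymm r := fun r hr => by
      rcases lt_or_eq_of_le (show r ≤ j by omega) with hr | rfl
      · exact (hlt r hr).le
      · exact hj.ge
    have hpos := forall_pos_of_esymm_nonneg hnonneg (by rwa [hd])
    exact (esymm_pos hpos (by omega)).ne' hj
  | succ d ih =>
    obtain ⟨s', hcard', hs'⟩ := exists_esymm_eq_mul_esymm (s := s) (by rintro rfl; simp at hd)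
    have hfactor : ∀ r < card s, 0 < ((card s : ℝ) - r) / card s := fun r hr =>
      div_pos (sub_pos.2 (by exact_mod_cast hr)) (by exact_mod_cast (show 0 < card s by omega))
    intro hj
    refine ih (s := s') (fun r hr => ?_) ?_ (by omega) (by rw [hs' j (by omega), hj, mul_zero])
    · rw [hs' r (by omega)]
      exact mul_pos (hfactor r (by omega)) (hlt r hr)
    · rw [hs' (j + 1) (by omega)]
      exact mul_pos (hfactor (j + 1) (by omega)) hsucc

theorem continuous_esymm_map_add (s : Multiset ℝ) (k : ℕ) :
    Continuous fun t : ℝ => (s.map (· + t)).esymm k := by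
  simp only [esymm, powersetCard_map, map_map, Function.comp_def]
  exact continuous_multiset_sum _ fun u _ => continuous_multiset_prod _ fun a _ => by fun_prop

theorem esymm_ne_zero_of_esymm_cons_pos {a : ℝ} {s : Multiset ℝ} {k : ℕ}
    (h : ∀ j ≤ k + 1, 0 < (a ::ₘ s).esymm j) (hlt : ∀ r < k, 0 < s.esymm r) : s.esymm k ≠ 0 := by
  intro hk
  refine esymm_ne_zero_of_esymm_succ_pos hlt ?_ hk
  simpa [esymm_cons_succ, hk] using h (k + 1) le_rfl

theorem esymm_pos_of_esymm_cons_pos {a : ℝ} {s : Multiset ℝ} {k : ℕ}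
    (h : ∀ j ≤ k + 1, 0 < (a ::ₘ s).esymm j) : 0 < s.esymm k := by
  induction k using Nat.strong_induction_on generalizing a s with
  | _ k ih =>
  have hks : k ≤ card s := by
    by_contra! hlt
    exact (h (k + 1) le_rfl).ne' (esymm_eq_zero_of_card_lt (by simp; omega))
  obtain ⟨c, hc⟩ : BddBelow (s.toFinset : Set ℝ) := s.toFinset.bddBelow
  have hT : 0 ≤ |c| + 1 := by positivity
  have hpos_far : 0 < (s.map (· + (|c| + 1))).esymm k := by
    refine esymm_pos (fun b hb => ?_) (by simpa using hks)
    obtain ⟨b, hb, rfl⟩ := mem_map.1 hb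
    have := hc (by simpa using hb)
    linarith [neg_abs_le c]
  by_contra! hnonpos
  obtain ⟨t, ht, hgt⟩ := intermediate_value_Icc hT (continuous_esymm_map_add s k).continuousOn
    ⟨by simpa using hnonpos, hpos_far.le⟩
  have hshift : ∀ j ≤ k + 1, 0 < ((a + t) ::ₘ s.map (· + t)).esymm j := fun j hj => by
    rw [← map_cons (· + t)]
    exact esymm_map_add_pos (fun i hi => (h i (hi.trans hj)).le) (h j hj) ht.1
  exact esymm_ne_zero_of_esymm_cons_pos hshift
    (fun r hr => ih r hr fun j hj => hshift j (by omega)) hgt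

end Multiset

theorem sigma_km1_erase_pos_general (n k : ℕ) (hk1 : 1 ≤ k)
    (lam : Fin n → ℝ) (hlam : lam ∈ gardingCone n k) (i : Fin n) :
    0 < sigmaEOn (Finset.univ.erase i) (k - 1) lam := by
  obtain ⟨k, rfl⟩ := Nat.exists_eq_add_of_le' hk1
  have hcons : Finset.univ.val.map lam = lam i ::ₘ (Finset.univ.erase i).val.map lam := by
    rw [Finset.erase_val, ← Multiset.map_cons, Multiset.cons_erase (Finset.mem_univ_val i)]
  rw [Nat.add_sub_cancel, sigmaEOn, ← Finset.esymm_map_val]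
  refine Multiset.esymm_pos_of_esymm_cons_pos (a := lam i) fun j hj => ?_
  rcases j.eq_zero_or_pos with rfl | hj0
  · simp
  · rw [← hcons, Finset.esymm_map_val]
    exact hlam j hj0 hj

/-- for `λ ∈ Γ_k`, `σ_{k-1}(λ|i) > 0` for every index `i`. -/
theorem sigma_km1_erase_pos (n k : ℕ) (hk1 : 1 ≤ k) (hkn : k ≤ n)
    (lam : Fin n → ℝ) (hlam : lam ∈ gardingCone n k) (i : Fin n) :
    0 < sigmaEOn (Finset.univ.erase i) (k - 1) lam :=
  sigma_km1_erase_pos_general n k hk1 lam hlam i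
end

section
/- Let 1 ≤ k ≤ n be an integer and let λ ∈ Γ_k satisfy λ_1 ≥ λ_2 ≥ ⋯ ≥ λ_n. Then λ_1 · σ_{k-1}(λ|1) ≥ (k/n) · σ_k(λ). -/
/-!
Splitting off the largest entry gives `σ_k(λ) = σ_k(λ|1) + λ_1 σ_{k-1}(λ|1)`, so it suffices to show
`k σ_k(λ|1) ≤ (n - k) λ_1 σ_{k-1}(λ|1)`. This is clear when `σ_k(λ|1) ≤ 0`. Otherwise `λ|1 ∈ Γ_k`,
and the identities `∑_{i ≠ 1} λ_i σ_{k-1}(λ|1i) = k σ_k(λ|1)` and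
`∑_{i ≠ 1} σ_{k-1}(λ|1i) = (n - k) σ_{k-1}(λ|1)`, together with `λ_i ≤ λ_1` and
`σ_{k-1}(λ|1i) > 0`, give it.

The positivity facts come from the deletion property `λ ∈ Γ_{m+1} ⇒ λ|i ∈ Γ_m`. If `σ_m(λ|i) ≤ 0`
were the first failure, lowering `λ_i` (which moves each `σ_{j+1}(λ)` by `-t σ_j(λ|i)`) until the
first `σ_j(λ)` reaches zero would keep `σ_1, …, σ_m ≥ 0` and `σ_{m+1} > 0`. By Rolle's theorem,
the derivatives of `∏ (X + λ_j)` stay real-rooted, and this forces such sign conditions to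
improve to `σ_1, …, σ_{m+1} > 0`: a contradiction.
-/

open Finset Polynomial

theorem Multiset.esymm_pos_s4 {R : Type*} [CommSemiring R] [PartialOrder R] [IsStrictOrderedRing R]
    {s : Multiset R} (hs : ∀ a ∈ s, 0 < a) {k : ℕ} (hk : k ≤ card s) : 0 < s.esymm k := by
  have hprod : ∀ t ∈ powersetCard k s, 0 < t.prod := fun t ht =>
    prod_pos fun a ha => hs a (mem_of_le (mem_powersetCard.1 ht).1 ha)
  obtain ⟨t, ht⟩ : ∃ t, t ∈ powersetCard k s := by
    rw [← card_pos_iff_exists_mem, card_powersetCard]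
    exact Nat.choose_pos hk
  refine (hprod t ht).trans_le (single_le_sum (fun u hu => ?_) _ (mem_map_of_mem _ ht))
  obtain ⟨v, hv, rfl⟩ := mem_map.1 hu
  exact (hprod v hv).le

theorem Multiset.esymm_cons_succ_s4 {R : Type*} [CommSemiring R] (a : R) (s : Multiset R) (k : ℕ) :
    (a ::ₘ s).esymm (k + 1) = s.esymm (k + 1) + a * s.esymm k := by
  simp only [esymm, powersetCard_cons, map_add, sum_add, map_map, Function.comp_def, prod_cons,
    sum_map_mul_left]

namespace Polynomial

theorem Splits.derivative_of_real {p : ℝ[X]} (hp : p.Splits) : (derivative p).Splits := by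
  rw [splits_iff_card_roots] at hp ⊢
  have := card_roots_le_derivative p
  have := natDegree_derivative_le p
  have := card_roots' (derivative p)
  omega

theorem Splits.iterate_derivative_of_real {p : ℝ[X]} (hp : p.Splits) (d : ℕ) :
    (derivative^[d] p).Splits := by
  induction d with
  | zero => exact hp
  | succ d ih => rw [Function.iterate_succ_apply']; exact ih.derivative_of_real

theorem neg_of_mem_roots_of_coeff_nonneg {p : ℝ[X]} (hp : ∀ i, 0 ≤ p.coeff i)
    (h0 : 0 < p.coeff 0) {r : ℝ} (hr : r ∈ p.roots) : r < 0 := by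
  by_contra! hr0
  have heval : 0 < p.eval r := by
    rw [eval_eq_sum_range]
    refine sum_pos' (fun i _ => mul_nonneg (hp i) (pow_nonneg hr0 i)) ⟨0, by simp, ?_⟩
    simpa using h0
  exact heval.ne' (isRoot_of_mem_roots hr)

theorem Splits.coeff_pos_of_coeff_nonneg {p : ℝ[X]} (hsplit : p.Splits)
    (hp : ∀ i, 0 ≤ p.coeff i) (h0 : 0 < p.coeff 0) {i : ℕ} (hi : i ≤ p.natDegree) :
    0 < p.coeff i := by
  have hne : p ≠ 0 := by rintro rfl; simp at h0
  have hlead : 0 < p.leadingCoeff := (hp _).lt_of_ne' (leadingCoeff_ne_zero.2 hne)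
  rw [coeff_eq_esymm_roots_of_splits hsplit hi, mul_assoc, ← Multiset.esymm_neg]
  refine mul_pos hlead (Multiset.esymm_pos_s4 (fun a ha => ?_) ?_)
  · obtain ⟨r, hr, rfl⟩ := Multiset.mem_map.1 ha
    exact neg_pos.2 (neg_of_mem_roots_of_coeff_nonneg hp h0 hr)
  · rw [Multiset.card_map, splits_iff_card_roots.1 hsplit]
    omega

end Polynomial

section SigmaEOn

variable {ι : Type*} [DecidableEq ι] (s : Finset ι) (x : ι → ℝ)

@[simp]
lemma sigmaEOn_zero : sigmaEOn s 0 x = 1 := by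
  simp [sigmaEOn]

lemma sigmaEOn_one : sigmaEOn s 1 x = ∑ i ∈ s, x i := by
  simp [sigmaEOn, powersetCard_one]

lemma sigmaEOn_of_card_lt {k : ℕ} (h : #s < k) : sigmaEOn s k x = 0 := by
  rw [sigmaEOn, powersetCard_eq_empty.2 h, sum_empty]

lemma le_card_of_sigmaEOn_pos {k : ℕ} (h : 0 < sigmaEOn s k x) : k ≤ #s := by
  by_contra! hk
  exact h.ne' (sigmaEOn_of_card_lt s x hk)

lemma sigmaEOn_congr {y : ι → ℝ} (h : ∀ i ∈ s, x i = y i) (k : ℕ) :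
    sigmaEOn s k x = sigmaEOn s k y :=
  sum_congr rfl fun _ ht => prod_congr rfl fun i hi => h i ((mem_powersetCard.1 ht).1 hi)

lemma sigmaEOn_succ_of_mem {i : ι} (hi : i ∈ s) (k : ℕ) :
    sigmaEOn s (k + 1) x = sigmaEOn (s.erase i) (k + 1) x + x i * sigmaEOn (s.erase i) k x := by
  simp only [sigmaEOn, ← esymm_map_val]
  rw [← insert_erase hi, insert_val_of_notMem (notMem_erase i s), Multiset.map_cons,
    Multiset.esymm_cons_succ_s4, erase_insert (notMem_erase i s)]

lemma sigmaEOn_update_succ {i : ι} (hi : i ∈ s) (t : ℝ) (k : ℕ) :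
    sigmaEOn s (k + 1) (Function.update x i (x i - t))
      = sigmaEOn s (k + 1) x - t * sigmaEOn (s.erase i) k x := by
  have hrest : ∀ l, sigmaEOn (s.erase i) l (Function.update x i (x i - t))
      = sigmaEOn (s.erase i) l x :=
    sigmaEOn_congr _ _ fun j hj => Function.update_of_ne (ne_of_mem_erase hj) _ _
  rw [sigmaEOn_succ_of_mem _ _ hi, sigmaEOn_succ_of_mem _ _ hi, hrest, hrest,
    Function.update_self]
  ring

lemma sum_sigmaEOn_erase {k : ℕ} (hk : k ≤ #s) :
    ∑ i ∈ s, sigmaEOn (s.erase i) k x = (#s - k : ℝ) * sigmaEOn s k x := by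
  unfold sigmaEOn
  rw [sum_comm' (t' := s.powersetCard k) (s' := fun t => s \ t), mul_sum]
  · refine sum_congr rfl fun t ht => ?_
    obtain ⟨hts, htk⟩ := mem_powersetCard.1 ht
    rw [sum_const, card_sdiff_of_subset hts, htk, nsmul_eq_mul, Nat.cast_sub hk]
  · intro i t
    simp only [mem_powersetCard, subset_erase, mem_sdiff]
    tauto

lemma sum_mul_sigmaEOn_erase {k : ℕ} (hk : k + 1 ≤ #s) :
    ∑ i ∈ s, x i * sigmaEOn (s.erase i) k x = (k + 1 : ℝ) * sigmaEOn s (k + 1) x := by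
  have hterm : ∀ i ∈ s, x i * sigmaEOn (s.erase i) k x
      = sigmaEOn s (k + 1) x - sigmaEOn (s.erase i) (k + 1) x := fun i hi => by
    rw [sigmaEOn_succ_of_mem s x hi]; ring
  rw [sum_congr rfl hterm, sum_sub_distrib, sum_sigmaEOn_erase s x (by omega), sum_const,
    nsmul_eq_mul]
  push_cast
  ring

lemma coeff_prod_X_add_C_eq_sigmaEOn {j : ℕ} :
    (∏ i ∈ s, (X + C (x i))).coeff j = if j ≤ #s then sigmaEOn s (#s - j) x else 0 := by
  split_ifs with hj
  · exact prod_X_add_C_coeff s x hj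
  · refine coeff_eq_zero_of_natDegree_lt ?_
    rw [natDegree_prod_of_monic _ _ fun i _ => monic_X_add_C _]
    simpa using hj

lemma coeff_iterate_derivative_prod_X_add_C {m : ℕ} (hms : m ≤ #s) (j : ℕ) :
    (derivative^[#s - m] (∏ i ∈ s, (X + C (x i)))).coeff j
      = (j + (#s - m)).descFactorial (#s - m) * if j ≤ m then sigmaEOn s (m - j) x else 0 := by
  rw [coeff_iterate_derivative, coeff_prod_X_add_C_eq_sigmaEOn, nsmul_eq_mul]
  congr 1
  by_cases hj : j ≤ m
  · rw [if_pos (by omega), if_pos hj]; congr 1; omega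
  · rw [if_neg (by omega), if_neg hj]

end SigmaEOn

section GardingOn

variable {ι : Type*} [DecidableEq ι] {s : Finset ι} {x : ι → ℝ}

/-- `x` restricted to `s` lies in `Γ_k`; the index `j = 0` may be included since `σ_0 = 1`. -/
def GardingOn (s : Finset ι) (k : ℕ) (x : ι → ℝ) : Prop :=
  ∀ j ≤ k, 0 < sigmaEOn s j x

lemma GardingOn.mono {k l : ℕ} (hx : GardingOn s k x) (hlk : l ≤ k) : GardingOn s l x :=
  fun j hj => hx j (hj.trans hlk)

lemma gardingOn_of_nonneg_of_pos {m : ℕ} (hnn : ∀ j < m, 0 ≤ sigmaEOn s j x)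
    (hm : 0 < sigmaEOn s m x) : GardingOn s m x := by
  have hms := le_card_of_sigmaEOn_pos s x hm
  set Q := derivative^[#s - m] (∏ i ∈ s, (X + C (x i)))
  have hQ := coeff_iterate_derivative_prod_X_add_C s x hms
  have hdesc : ∀ j ≤ m, (0 : ℝ) < (j + (#s - m)).descFactorial (#s - m) :=
    fun j _ => Nat.cast_pos.2 (Nat.descFactorial_pos.2 (by omega))
  have hQnn : ∀ j, 0 ≤ Q.coeff j := by
    intro j
    rw [hQ]
    refine mul_nonneg (Nat.cast_nonneg _) ?_
    split_ifs with hj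
    · rcases Nat.eq_zero_or_pos j with rfl | hj0
      · simpa using hm.le
      · exact hnn _ (by omega)
    · exact le_rfl
  have hQ0 : 0 < Q.coeff 0 := by
    rw [hQ, if_pos (Nat.zero_le _)]
    exact mul_pos (hdesc 0 (Nat.zero_le _)) hm
  have hQdeg : m ≤ Q.natDegree := by
    refine le_natDegree_of_ne_zero ?_
    rw [hQ, if_pos le_rfl, Nat.sub_self, sigmaEOn_zero, mul_one]
    exact (hdesc m le_rfl).ne'
  have hsplit : Q.Splits :=
    (Splits.prod fun i _ => Splits.X_add_C (x i)).iterate_derivative_of_real _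
  intro j hj
  have hQj := hsplit.coeff_pos_of_coeff_nonneg hQnn hQ0 (i := m - j) (by omega)
  rw [hQ, if_pos (Nat.sub_le _ _), Nat.sub_sub_self hj] at hQj
  exact pos_of_mul_pos_right hQj (Nat.cast_nonneg _)

lemma GardingOn.sigmaEOn_erase_pos {m : ℕ} {i : ι} (hx : GardingOn s (m + 2) x) (hi : i ∈ s)
    (he : GardingOn (s.erase i) m x) : 0 < sigmaEOn (s.erase i) (m + 1) x := by
  by_contra! hlast
  set ratio : ℕ → ℝ := fun j => sigmaEOn s (j + 1) x / sigmaEOn (s.erase i) j x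
  obtain ⟨j, hj, hmin⟩ := (range (m + 1)).exists_min_image ratio nonempty_range_add_one
  rw [mem_range] at hj
  set y := Function.update x i (x i - ratio j)
  have hratio : 0 < ratio j := div_pos (hx _ (by omega)) (he _ (by omega))
  have hyj : sigmaEOn s (j + 1) y = 0 := by
    rw [sigmaEOn_update_succ s x hi, div_mul_cancel₀ _ (he _ (by omega)).ne', sub_self]
  have hynn : ∀ l < m + 1, 0 ≤ sigmaEOn s (l + 1) y := by
    intro l hl
    rw [sigmaEOn_update_succ s x hi, sub_nonneg, ← le_div_iff₀ (he _ (by omega))]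
    exact hmin l (mem_range.2 hl)
  have hytop : 0 < sigmaEOn s (m + 2) y := by
    rw [sigmaEOn_update_succ s x hi]
    exact sub_pos.2 ((mul_nonpos_of_nonneg_of_nonpos hratio.le hlast).trans_lt (hx _ le_rfl))
  have hy : GardingOn s (m + 2) y := by
    refine gardingOn_of_nonneg_of_pos (fun l hl => ?_) hytop
    rcases l with _ | l
    · simp
    · exact hynn l (by omega)
  exact (hy (j + 1) (by omega)).ne' hyj

lemma GardingOn.erase {m : ℕ} {i : ι} (hx : GardingOn s (m + 1) x) (hi : i ∈ s) :
    GardingOn (s.erase i) m x := by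
  induction m with
  | zero => intro j hj; simp [Nat.le_zero.1 hj]
  | succ m ih =>
    have he := ih (hx.mono (by omega))
    intro j hj
    rcases Nat.lt_or_eq_of_le hj with hj | rfl
    · exact he j (by omega)
    · exact hx.sigmaEOn_erase_pos hi he

lemma GardingOn.succ_mul_sigmaEOn_le {k : ℕ} (hx : GardingOn s (k + 1) x) {M : ℝ}
    (hM : ∀ i ∈ s, x i ≤ M) :
    (k + 1 : ℝ) * sigmaEOn s (k + 1) x ≤ M * ((#s - k : ℝ) * sigmaEOn s k x) := by
  have hk := le_card_of_sigmaEOn_pos s x (hx (k + 1) le_rfl)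
  calc (k + 1 : ℝ) * sigmaEOn s (k + 1) x = ∑ i ∈ s, x i * sigmaEOn (s.erase i) k x :=
        (sum_mul_sigmaEOn_erase s x hk).symm
    _ ≤ ∑ i ∈ s, M * sigmaEOn (s.erase i) k x :=
        sum_le_sum fun i hi => mul_le_mul_of_nonneg_right (hM i hi) ((hx.erase hi) k le_rfl).le
    _ = M * ((#s - k : ℝ) * sigmaEOn s k x) := by
        rw [← mul_sum, sum_sigmaEOn_erase s x (by omega)]

lemma GardingOn.succ_mul_sigmaEOn_erase_le {k : ℕ} {i : ι} (hx : GardingOn s (k + 1) x)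
    (hi : i ∈ s) (hmax : ∀ j ∈ s, x j ≤ x i) :
    (k + 1 : ℝ) * sigmaEOn (s.erase i) (k + 1) x
      ≤ x i * ((#s - (k + 1) : ℝ) * sigmaEOn (s.erase i) k x) := by
  have hk := le_card_of_sigmaEOn_pos s x (hx (k + 1) le_rfl)
  have hnk : (0 : ℝ) ≤ #s - (k + 1) := by rw [sub_nonneg]; exact_mod_cast hk
  have he : GardingOn (s.erase i) k x := hx.erase hi
  have hxi : 0 ≤ x i := by
    obtain ⟨j, hj, hxj⟩ := exists_lt_of_sum_lt (s := s) (f := 0) (g := x)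
      (by simpa [sigmaEOn_one] using hx 1 (by omega))
    exact hxj.le.trans (hmax j hj)
  rcases le_or_gt (sigmaEOn (s.erase i) (k + 1) x) 0 with hneg | hpos
  · calc (k + 1 : ℝ) * sigmaEOn (s.erase i) (k + 1) x ≤ 0 :=
          mul_nonpos_of_nonneg_of_nonpos (by positivity) hneg
      _ ≤ _ := mul_nonneg hxi (mul_nonneg hnk (he k le_rfl).le)
  · have he' : GardingOn (s.erase i) (k + 1) x :=
      gardingOn_of_nonneg_of_pos (fun j hj => (he j (by omega)).le) hpos
    have hcard : (#(s.erase i) : ℝ) = #s - 1 := by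
      rw [card_erase_of_mem hi, Nat.cast_sub (by omega), Nat.cast_one]
    have := he'.succ_mul_sigmaEOn_le fun j hj => hmax j (mem_of_mem_erase hj)
    rwa [hcard, sub_sub, add_comm 1] at this

lemma GardingOn.succ_mul_sigmaEOn_le_card_mul {k : ℕ} {i : ι} (hx : GardingOn s (k + 1) x)
    (hi : i ∈ s) (hmax : ∀ j ∈ s, x j ≤ x i) :
    (k + 1 : ℝ) * sigmaEOn s (k + 1) x ≤ #s * (x i * sigmaEOn (s.erase i) k x) := by
  rw [sigmaEOn_succ_of_mem s x hi]
  linarith [hx.succ_mul_sigmaEOn_erase_le hi hmax]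

end GardingOn

lemma gardingOn_univ_of_mem_gardingCone {n k : ℕ} {lam : Fin n → ℝ}
    (hlam : lam ∈ gardingCone n k) : GardingOn univ k lam := by
  intro j hj
  rcases Nat.eq_zero_or_pos j with rfl | hj0
  · simp
  · exact hlam j hj0 hj

theorem top_eigen_times_sigma_ge_general (n k : ℕ) (hn : 0 < n) (hk1 : 1 ≤ k)
    (lam : Fin n → ℝ) (hlam : lam ∈ gardingCone n k) (hdec : Antitone lam) :
    (k : ℝ) / (n : ℝ) * sigmaE k lam ≤
      lam ⟨0, hn⟩ * sigmaEOn (Finset.univ.erase ⟨0, hn⟩) (k - 1) lam := by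
  obtain ⟨k, rfl⟩ : ∃ m, k = m + 1 := ⟨k - 1, by omega⟩
  have key := (gardingOn_univ_of_mem_gardingCone hlam).succ_mul_sigmaEOn_le_card_mul
    (mem_univ ⟨0, hn⟩) fun i _ => hdec (Nat.zero_le i.val)
  rw [card_univ, Fintype.card_fin] at key
  rw [div_mul_eq_mul_div, div_le_iff₀ (by exact_mod_cast hn), sigmaE, Nat.add_sub_cancel]
  push_cast
  linarith

/-- if `λ ∈ Γ_k` is arranged nonincreasingly, then
`λ_1 σ_{k-1}(λ|1) ≥ (k/n) σ_k(λ)`. -/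
theorem top_eigen_times_sigma_ge (n k : ℕ) (hn : 0 < n) (hk1 : 1 ≤ k) (hkn : k ≤ n)
    (lam : Fin n → ℝ) (hlam : lam ∈ gardingCone n k) (hdec : Antitone lam) :
    (k : ℝ) / (n : ℝ) * sigmaE k lam ≤
      lam ⟨0, hn⟩ * sigmaEOn (Finset.univ.erase ⟨0, hn⟩) (k - 1) lam :=
  top_eigen_times_sigma_ge_general n k hn hk1 lam hlam hdec
end

section
/- (Generalized Newton–MacLaurin inequality) Let m, l, r, s be integers with m > l ≥ 0, r > s ≥ 0, m ≥ r and l ≥ s, and let λ ∈ Γ_m. Then [ (σ_m(λ)/C(n,m)) / (σ_l(λ)/C(n,l)) ]^{1/(m−l)} ≤ [ (σ_r(λ)/C(n,r)) / (σ_s(λ)/C(n,s)) ]^{1/(r−s)}, where C(n,j) denotes the binomial coefficient. -/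
open Polynomial

/-- `p` is zero or splits over `ℝ` (all roots real, counted with multiplicity). -/
def RR0 (p : ℝ[X]) : Prop :=
  p = 0 ∨ ∃ c : ℝ, c ≠ 0 ∧ ∃ s : Multiset ℝ, p = C c * (s.map fun r => X - C r).prod

lemma RR0_of_card_roots {p : ℝ[X]} (h : Multiset.card p.roots = p.natDegree) : RR0 p := by
  by_cases hp : p = 0
  · exact Or.inl hp
  · exact Or.inr ⟨p.leadingCoeff, leadingCoeff_ne_zero.mpr hp, p.roots,
      (C_leadingCoeff_mul_prod_multiset_X_sub_C h).symm⟩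

lemma RR0.parts {c : ℝ} {s : Multiset ℝ}
    (hc : c ≠ 0) (p : ℝ[X]) (hp : p = C c * (s.map fun r => X - C r).prod) :
    p ≠ 0 ∧ p.natDegree = Multiset.card s ∧ p.roots = s := by
  have hm : ((s.map fun r => X - C r).prod : ℝ[X]).Monic :=
    monic_multiset_prod_of_monic _ _ (fun a _ => monic_X_sub_C a)
  refine ⟨?_, ?_, ?_⟩
  · rw [hp]
    exact mul_ne_zero (C_ne_zero.mpr hc) hm.ne_zero
  · rw [hp, natDegree_C_mul hc, natDegree_multiset_prod_X_sub_C_eq_card]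
  · rw [hp, roots_C_mul _ hc, roots_multiset_prod_X_sub_C]

lemma RR0.deriv {p : ℝ[X]} (h : RR0 p) : RR0 (Polynomial.derivative p) := by
  rcases h with h | ⟨c, hc, s, hp⟩
  · left; simp [h]
  obtain ⟨hp0, hdeg, hroots⟩ := RR0.parts hc p hp
  by_cases hs : p.natDegree = 0
  · left
    rw [eq_C_of_natDegree_eq_zero hs]
    exact derivative_C
  · obtain ⟨d, hd⟩ : ∃ d, p.natDegree = d + 1 := ⟨p.natDegree - 1, by omega⟩
    have hco : (Polynomial.derivative p).coeff d = p.coeff (d + 1) * ((d : ℝ) + 1) :=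
      coeff_derivative p d
    have hne : (Polynomial.derivative p).coeff d ≠ 0 := by
      rw [hco]
      refine mul_ne_zero ?_ (by positivity)
      rw [← hd]
      exact leadingCoeff_ne_zero.mpr hp0
    have h2 : d ≤ (Polynomial.derivative p).natDegree := le_natDegree_of_ne_zero hne
    have h2' : (Polynomial.derivative p).natDegree ≤ p.natDegree - 1 := natDegree_derivative_le p
    have h3 : Multiset.card (Polynomial.derivative p).roots ≤ (Polynomial.derivative p).natDegree :=
      card_roots' _
    have hcp : Multiset.card p.roots = p.natDegree := by rw [hroots, ← hdeg]
    have h4 : p.natDegree ≤ Multiset.card (Polynomial.derivative p).roots + 1 :=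
      hcp ▸ card_roots_le_derivative p
    exact RR0_of_card_roots (by omega)

lemma RR0.iterate {p : ℝ[X]} (h : RR0 p) (j : ℕ) : RR0 (Polynomial.derivative^[j] p) := by
  induction j with
  | zero => simpa using h
  | succ k ih => rw [Function.iterate_succ_apply']; exact ih.deriv

lemma reverse_C_eq (c : ℝ) : (C c).reverse = C c := by
  rw [reverse, natDegree_C, reflect_C, pow_zero, mul_one]

lemma reverse_X_sub_C (r : ℝ) : (X - C r).reverse = 1 - C r * X := by
  have h : (X - C r : ℝ[X]) = X ^ 1 - C r * X ^ 0 := by ring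
  rw [reverse, natDegree_X_sub_C, h, reflect_sub, reflect_monomial, reflect_C_mul_X_pow]
  norm_num

lemma reverse_multiset_prod (s : Multiset ℝ) :
    ((s.map fun r => (X : ℝ[X]) - C r).prod).reverse = (s.map fun r => 1 - C r * X).prod := by
  induction s using Multiset.induction with
  | empty =>
      rw [Multiset.map_zero, Multiset.map_zero, Multiset.prod_zero, ← C_1, reverse_C_eq]
  | cons a s ih =>
      simp only [Multiset.map_cons, Multiset.prod_cons]
      rw [reverse_mul_of_domain, ih, reverse_X_sub_C]

lemma RR0_prod_one_sub (s : Multiset ℝ) :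
    ∀ c : ℝ, c ≠ 0 → RR0 (C c * (s.map fun r => 1 - C r * X).prod) := by
  induction s using Multiset.induction with
  | empty =>
      intro c hc
      exact Or.inr ⟨c, hc, 0, by simp⟩
  | cons a s ih =>
      intro c hc
      by_cases ha : a = 0
      · simpa [ha] using ih c hc
      · rcases ih c hc with h0 | ⟨c', hc', s', hs'⟩
        · left
          simp only [Multiset.map_cons, Multiset.prod_cons]
          have hre : C c * ((1 - C a * X) * (s.map fun r => 1 - C r * X).prod)
              = (1 - C a * X) * (C c * (s.map fun r => 1 - C r * X).prod) := by ring
          rw [hre, h0, mul_zero]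
        · right
          refine ⟨-a * c', mul_ne_zero (neg_ne_zero.mpr ha) hc', a⁻¹ ::ₘ s', ?_⟩
          have key : (1 - C a * X : ℝ[X]) = C (-a) * (X - C a⁻¹) := by
            rw [mul_sub, ← C_mul, neg_mul, mul_inv_cancel₀ ha]
            simp [C_neg]
            ring
          simp only [Multiset.map_cons, Multiset.prod_cons]
          calc C c * ((1 - C a * X) * (s.map fun r => 1 - C r * X).prod)
              = (1 - C a * X) * (C c * (s.map fun r => 1 - C r * X).prod) := by ring
            _ = C (-a) * (X - C a⁻¹) * (C c' * (s'.map fun r => X - C r).prod) := by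
                rw [key, hs']
            _ = C (-a * c') * ((X - C a⁻¹) * (s'.map fun r => X - C r).prod) := by
                rw [C_mul]; ring

lemma RR0.rev {p : ℝ[X]} (h : RR0 p) : RR0 p.reverse := by
  rcases h with h | ⟨c, hc, s, hp⟩
  · left; simp [h, reverse_zero]
  · rw [hp, reverse_mul_of_domain, reverse_C_eq, reverse_multiset_prod]
    exact RR0_prod_one_sub s c hc

lemma RR0.disc {p : ℝ[X]} (h : RR0 p) (hd : p.natDegree ≤ 2) :
    4 * p.coeff 0 * p.coeff 2 ≤ p.coeff 1 ^ 2 := by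
  rcases h with h | ⟨c, hc, s, hp⟩
  · simp [h]
  obtain ⟨hp0, hdeg, hroots⟩ := RR0.parts hc p hp
  have hcard : Multiset.card s ≤ 2 := hdeg ▸ hd
  rcases Nat.lt_or_ge (Multiset.card s) 2 with hlt | hge
  · have h2 : p.coeff 2 = 0 := coeff_eq_zero_of_natDegree_lt (by omega)
    rw [h2]
    nlinarith [sq_nonneg (p.coeff 1)]
  · have h2 : Multiset.card s = 2 := le_antisymm hcard hge
    obtain ⟨u, v, rfl⟩ := Multiset.card_eq_two.mp h2
    have hpe : p = C c * (X ^ 2 - C (u + v) * X + C (u * v)) := by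
      rw [hp]
      simp only [Multiset.insert_eq_cons, Multiset.map_cons, Multiset.prod_cons,
        Multiset.map_singleton, Multiset.prod_singleton, C_add, C_mul]
      ring
    have h0 : p.coeff 0 = c * (u * v) := by
      rw [hpe]
      simp [coeff_C_mul, coeff_X_pow, coeff_C, coeff_X]
    have h1 : p.coeff 1 = c * (-(u + v)) := by
      rw [hpe]
      simp [coeff_C_mul, coeff_X_pow, coeff_C, coeff_X]
    have h22 : p.coeff 2 = c := by
      rw [hpe]
      simp [coeff_C_mul, coeff_X_pow, coeff_C, coeff_X]
    rw [h0, h1, h22]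
    nlinarith [sq_nonneg (c * (u - v))]

lemma desc_one (a : ℕ) : (a + 1).descFactorial a = (a + 1).factorial := by
  induction a with
  | zero => rfl
  | succ b ih =>
      have h : (b + 1 + 1).descFactorial (b + 1) = (b + 1 + 1) * (b + 1).descFactorial b :=
        Nat.succ_descFactorial_succ (b + 1) b
      rw [h, ih]
      simp [Nat.factorial_succ]

lemma desc_two (a : ℕ) : 2 * (a + 2).descFactorial a = (a + 2).factorial := by
  induction a with
  | zero => rfl
  | succ b ih =>
      have h : (b + 1 + 2).descFactorial (b + 1) = (b + 1 + 2) * (b + 2).descFactorial b := by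
        rw [show b + 1 + 2 = (b + 2) + 1 by omega]
        exact Nat.succ_descFactorial_succ (b + 2) b
      rw [h, ← Nat.mul_assoc, Nat.mul_comm 2 (b + 1 + 2), Nat.mul_assoc, ih]
      simp [show b + 1 + 2 = (b + 2) + 1 by omega, Nat.factorial_succ]

lemma newton_core (a e n : ℕ) (hn : n = a + 1 + 1 + e) (x : Fin n → ℝ) :
    sigmaE a x * sigmaE (a + 2) x *
        ((a.factorial : ℝ) * (a + 2).factorial * (e + 2).factorial * e.factorial) ≤
      sigmaE (a + 1) x ^ 2 * ((a + 1).factorial : ℝ) ^ 2 * ((e + 1).factorial : ℝ) ^ 2 := by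
  set P : ℝ[X] := ∏ i : Fin n, (X + C (x i)) with hPdef
  have hPmonic : P.Monic := monic_prod_of_monic _ _ fun i _ => monic_X_add_C (x i)
  have hPdeg : P.natDegree = n := by
    rw [hPdef, natDegree_prod _ _ (fun i _ => (monic_X_add_C (x i)).ne_zero)]
    simp
  have hco : ∀ t : ℕ, t ≤ n → P.coeff t = sigmaE (n - t) x := by
    intro t ht
    have hcard : t ≤ (Finset.univ : Finset (Fin n)).card := by simpa using ht
    have h := Finset.prod_X_add_C_coeff (Finset.univ : Finset (Fin n)) x hcard
    rw [hPdef, h]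
    simp [sigmaE, sigmaEOn]
  have hPR : RR0 P := by
    refine Or.inr ⟨1, one_ne_zero, Finset.univ.val.map (fun i => -x i), ?_⟩
    rw [C_1, one_mul, Multiset.map_map, hPdef, Finset.prod_eq_multiset_prod]
    congr 1
    apply Multiset.map_congr rfl
    intro i _
    simp [Function.comp, sub_neg_eq_add]
  set Q := Polynomial.derivative^[e] P with hQdef
  have hQco : ∀ t : ℕ, Q.coeff t = ((t + e).descFactorial e : ℝ) * P.coeff (t + e) := by
    intro t
    rw [hQdef, Polynomial.coeff_iterate_derivative, nsmul_eq_mul]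
  have hQdeg : Q.natDegree = a + 2 := by
    have hle : Q.natDegree ≤ a + 2 := by
      have h := natDegree_iterate_derivative P e
      rw [hPdeg, ← hQdef] at h
      omega
    have hne : Q.coeff (a + 2) ≠ 0 := by
      rw [hQco]
      have h1 : P.coeff (a + 2 + e) = 1 := by
        rw [show a + 2 + e = n by omega, ← hPdeg]
        exact hPmonic.coeff_natDegree
      rw [h1, mul_one]
      have hpos : (a + 2 + e).descFactorial e ≠ 0 := by
        rw [Ne, Nat.descFactorial_eq_zero_iff_lt]
        omega
      have hpos' : 0 < (a + 2 + e).descFactorial e := Nat.pos_of_ne_zero hpos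
      exact_mod_cast hpos'.ne'
    exact le_antisymm hle (le_natDegree_of_ne_zero hne)
  set R := Q.reverse with hRdef
  have hRco : ∀ j : ℕ, j ≤ a + 2 → R.coeff j = Q.coeff (a + 2 - j) := by
    intro j hj
    rw [hRdef, coeff_reverse, hQdeg, revAt_le hj]
  set S := Polynomial.derivative^[a] R with hSdef
  have hSR : RR0 S := ((hPR.iterate e).rev).iterate a
  have hSdeg : S.natDegree ≤ 2 := by
    have h1 := natDegree_iterate_derivative R a
    rw [← hSdef] at h1
    have h2 : R.natDegree ≤ a + 2 := hQdeg ▸ Q.reverse_natDegree_le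
    omega
  have hdisc := hSR.disc hSdeg
  have hSco : ∀ t : ℕ, S.coeff t = ((t + a).descFactorial a : ℝ) * R.coeff (t + a) := by
    intro t
    rw [hSdef, Polynomial.coeff_iterate_derivative, nsmul_eq_mul]
  have e0 : S.coeff 0 = (a.factorial : ℝ) * (((e + 2).descFactorial e : ℝ) * sigmaE a x) := by
    rw [hSco 0, Nat.zero_add, hRco a (by omega), show a + 2 - a = 2 by omega, hQco 2,
      hco (2 + e) (by omega), show n - (2 + e) = a by omega, Nat.descFactorial_self,
      show 2 + e = e + 2 by omega]
  have e1 : S.coeff 1 = ((a + 1).factorial : ℝ) * (((e + 1).factorial : ℝ) * sigmaE (a + 1) x) := by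
    rw [hSco 1, show 1 + a = a + 1 by omega, hRco (a + 1) (by omega),
      show a + 2 - (a + 1) = 1 by omega, hQco 1, hco (1 + e) (by omega),
      show n - (1 + e) = a + 1 by omega, desc_one, show 1 + e = e + 1 by omega, desc_one]
  have e2 : S.coeff 2 = (((a + 2).descFactorial a : ℝ)) * ((e.factorial : ℝ) * sigmaE (a + 2) x) := by
    rw [hSco 2, show 2 + a = a + 2 by omega, hRco (a + 2) (by omega),
      show a + 2 - (a + 2) = 0 by omega, hQco 0, Nat.zero_add, hco e (by omega),
      show n - e = a + 2 by omega, Nat.descFactorial_self]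
  rw [e0, e1, e2] at hdisc
  have d1 : 2 * ((a + 2).descFactorial a : ℝ) = ((a + 2).factorial : ℝ) := by
    exact_mod_cast congrArg (Nat.cast : ℕ → ℝ) (desc_two a)
  have d2 : 2 * ((e + 2).descFactorial e : ℝ) = ((e + 2).factorial : ℝ) := by
    exact_mod_cast congrArg (Nat.cast : ℕ → ℝ) (desc_two e)
  calc sigmaE a x * sigmaE (a + 2) x *
        ((a.factorial : ℝ) * (a + 2).factorial * (e + 2).factorial * e.factorial)
      = 4 * ((a.factorial : ℝ) * (((e + 2).descFactorial e : ℝ) * sigmaE a x)) *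
          (((a + 2).descFactorial a : ℝ) * ((e.factorial : ℝ) * sigmaE (a + 2) x)) := by
        rw [← d1, ← d2]; ring
    _ ≤ (((a + 1).factorial : ℝ) * (((e + 1).factorial : ℝ) * sigmaE (a + 1) x)) ^ 2 := hdisc
    _ = sigmaE (a + 1) x ^ 2 * ((a + 1).factorial : ℝ) ^ 2 * ((e + 1).factorial : ℝ) ^ 2 := by
        ring

lemma box_compare (q : ℕ → ℝ) (m l r s : ℕ) (hq : ∀ k, k < m → 0 < q k)
    (hmono : ∀ i j, j ≤ i → i < m → q i ≤ q j)
    (hls : s ≤ l) (hlm : l < m) (hsr : s < r) (hrm : r ≤ m) :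
    (∏ k ∈ Finset.Ico l m, q k) ^ (r - s) ≤ (∏ k ∈ Finset.Ico s r, q k) ^ (m - l) := by
  classical
  set B := (Finset.Ico l m) ×ˢ (Finset.Ico s r) with hB
  have hmemB : ∀ p : ℕ × ℕ, p ∈ B ↔ (l ≤ p.1 ∧ p.1 < m) ∧ s ≤ p.2 ∧ p.2 < r := by
    intro p
    rw [hB, Finset.mem_product, Finset.mem_Ico, Finset.mem_Ico]
  have hL : ∏ p ∈ B, q p.1 = (∏ k ∈ Finset.Ico l m, q k) ^ (r - s) := by
    rw [hB, Finset.prod_product, ← Finset.prod_pow]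
    exact Finset.prod_congr rfl fun i _ => by simp [Finset.prod_const, Nat.card_Ico]
  have hR : ∏ p ∈ B, q p.2 = (∏ k ∈ Finset.Ico s r, q k) ^ (m - l) := by
    rw [hB, Finset.prod_product]
    simp [Finset.prod_const, Nat.card_Ico]
  rw [← hL, ← hR]
  rw [← Finset.prod_filter_mul_prod_filter_not B (fun p => p.swap ∈ B) (fun p => q p.1),
    ← Finset.prod_filter_mul_prod_filter_not B (fun p => p.swap ∈ B) (fun p => q p.2)]
  have hswap : ∀ p : ℕ × ℕ, p ∈ B.filter (fun p => p.swap ∈ B) →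
      p.swap ∈ B.filter (fun p => p.swap ∈ B) := by
    intro p hp
    rw [Finset.mem_filter] at hp ⊢
    simpa [Prod.swap] using ⟨hp.2, hp.1⟩
  have hsym : ∏ p ∈ B.filter (fun p => p.swap ∈ B), q p.1
      = ∏ p ∈ B.filter (fun p => p.swap ∈ B), q p.2 := by
    refine Finset.prod_nbij' Prod.swap Prod.swap hswap hswap ?_ ?_ ?_
    · intro p _; simp
    · intro p _; simp
    · intro p _; simp
  rw [hsym]
  have hpt : ∏ p ∈ B.filter (fun p => ¬ p.swap ∈ B), q p.1
      ≤ ∏ p ∈ B.filter (fun p => ¬ p.swap ∈ B), q p.2 := by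
    refine Finset.prod_le_prod ?_ ?_
    · intro p hp
      rw [Finset.mem_filter, hmemB] at hp
      exact (hq p.1 hp.1.1.2).le
    · intro p hp
      rw [Finset.mem_filter, hmemB, hmemB] at hp
      refine hmono p.1 p.2 ?_ hp.1.1.2
      rcases hp with ⟨⟨⟨h1, h2⟩, h3, h4⟩, h5⟩
      simp only [Prod.fst_swap, Prod.snd_swap] at h5
      omega
  have hnn : 0 ≤ ∏ p ∈ B.filter (fun p => p.swap ∈ B), q p.2 := by
    refine Finset.prod_nonneg ?_
    intro p hp
    rw [Finset.mem_filter, hmemB] at hp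
    exact (hq p.2 (by omega)).le
  exact mul_le_mul_of_nonneg_left hpt hnn

/-- the generalized Newton–MacLaurin inequality. -/
theorem newton_macLaurin (n m l r s : ℕ) (hml : l < m) (hrs : s < r)
    (hmr : r ≤ m) (hls : s ≤ l) (lam : Fin n → ℝ) (hlam : lam ∈ gardingCone n m) :
    ((sigmaE m lam / (n.choose m : ℝ)) / (sigmaE l lam / (n.choose l : ℝ)))
        ^ (1 / ((m : ℝ) - (l : ℝ))) ≤
    ((sigmaE r lam / (n.choose r : ℝ)) / (sigmaE s lam / (n.choose s : ℝ)))
        ^ (1 / ((r : ℝ) - (s : ℝ))) := by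
  classical
  set E : ℕ → ℝ := fun j => sigmaE j lam / (n.choose j : ℝ) with hE
  have hσm : 0 < sigmaE m lam := hlam m (by omega) le_rfl
  have hmn : m ≤ n := by
    by_contra h
    push_neg at h
    have hz : sigmaE m lam = 0 := by
      unfold sigmaE sigmaEOn
      rw [Finset.powersetCard_eq_empty.mpr (by simpa using h)]
      simp
    rw [hz] at hσm
    exact lt_irrefl 0 hσm
  have hσ0 : sigmaE 0 lam = 1 := by
    simp [sigmaE, sigmaEOn]
  have hEpos : ∀ j, j ≤ m → 0 < E j := by
    intro j hj
    have hc : 0 < (n.choose j : ℝ) := by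
      exact_mod_cast Nat.choose_pos (le_trans hj hmn)
    rcases Nat.eq_zero_or_pos j with rfl | hj1
    · rw [hE]
      simp only [hσ0]
      positivity
    · exact div_pos (hlam j hj1 hj) hc
  -- Newton's inequality in normalized form
  have hnewton : ∀ k, k + 2 ≤ n → E k * E (k + 2) ≤ E (k + 1) ^ 2 := by
    intro k hk
    have hcore := newton_core k (n - k - 2) n (by omega) lam
    have hfac : (0:ℝ) < (n.factorial : ℝ) := by exact_mod_cast Nat.factorial_pos n
    have hchoose : ∀ j, j ≤ n →
        (n.choose j : ℝ) * (j.factorial : ℝ) * ((n - j).factorial : ℝ) = (n.factorial : ℝ) := by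
      intro j hj
      exact_mod_cast congrArg (Nat.cast : ℕ → ℝ) (Nat.choose_mul_factorial_mul_factorial hj)
    have hEeq : ∀ j, j ≤ n →
        E j = sigmaE j lam * (j.factorial : ℝ) * ((n - j).factorial : ℝ) / (n.factorial : ℝ) := by
      intro j hj
      have hc : (0:ℝ) < (n.choose j : ℝ) := by exact_mod_cast Nat.choose_pos hj
      have hf1 : (0:ℝ) < (j.factorial : ℝ) := by exact_mod_cast Nat.factorial_pos j
      have hf2 : (0:ℝ) < ((n - j).factorial : ℝ) := by exact_mod_cast Nat.factorial_pos (n - j)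
      rw [hE]
      rw [div_eq_div_iff hc.ne' hfac.ne', ← hchoose j hj]
      ring
    rw [hEeq k (by omega), hEeq (k + 1) (by omega), hEeq (k + 2) (by omega)]
    rw [div_mul_div_comm, div_pow, ← pow_two]
    rw [div_le_div_iff₀ (by positivity) (by positivity)]
    have h1 : n - k = (n - k - 2) + 2 := by omega
    have h2 : n - (k + 1) = (n - k - 2) + 1 := by omega
    have h3 : n - (k + 2) = n - k - 2 := by omega
    rw [h1, h2, h3]
    set e := n - k - 2
    have expand : sigmaE k lam * (k.factorial : ℝ) * ((e + 2).factorial : ℝ) *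
          (sigmaE (k + 2) lam * ((k + 2).factorial : ℝ) * ((e).factorial : ℝ)) *
          ((n.factorial : ℝ)) ^ 2
        = (sigmaE k lam * sigmaE (k + 2) lam *
            ((k.factorial : ℝ) * ((k + 2).factorial : ℝ) * ((e + 2).factorial : ℝ) *
              (e.factorial : ℝ))) * ((n.factorial : ℝ)) ^ 2 := by ring
    nlinarith [hcore, sq_nonneg ((n.factorial : ℝ)), hfac, mul_le_mul_of_nonneg_right hcore (le_of_lt (by positivity : (0:ℝ) < ((n.factorial : ℝ)) ^ 2))]
  -- the ratio sequence
  set q : ℕ → ℝ := fun k => E (k + 1) / E k with hq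
  have hqpos : ∀ k, k < m → 0 < q k := by
    intro k hk
    exact div_pos (hEpos _ (by omega)) (hEpos _ (by omega))
  have hqstep : ∀ k, k + 1 < m → q (k + 1) ≤ q k := by
    intro k hk
    have hnew := hnewton k (by omega)
    have h1 := hEpos (k + 1) (by omega)
    have h2 := hEpos k (by omega)
    rw [hq]
    simp only []
    rw [div_le_div_iff₀ h1 h2]
    nlinarith [hnew]
  have hmono : ∀ i j, j ≤ i → i < m → q i ≤ q j := by
    intro i j hji him
    induction i, hji using Nat.le_induction with
    | base => exact le_rfl
    | succ i hji ih => exact (hqstep i him).trans (ih (by omega))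
  have htel : ∀ u v, u ≤ v → v ≤ m → ∏ k ∈ Finset.Ico u v, q k = E v / E u := by
    intro u v huv hvm
    induction v, huv using Nat.le_induction with
    | base =>
        rw [Finset.Ico_self, Finset.prod_empty, div_self (hEpos u (by omega)).ne']
    | succ v huv ih =>
        have hvne : E v ≠ 0 := (hEpos v (by omega)).ne'
        rw [Finset.prod_Ico_succ_top huv, ih (by omega), hq]
        show E v / E u * (E (v + 1) / E v) = E (v + 1) / E u
        rw [div_mul_div_comm, mul_comm (E u) (E v)]
        exact mul_div_mul_left _ _ hvne
  have hbox := box_compare q m l r s hqpos hmono hls hml hrs hmr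
  rw [htel l m hml.le le_rfl, htel s r hrs.le (by omega)] at hbox
  -- pass to real exponents
  have ha : 0 < E m / E l := div_pos (hEpos m le_rfl) (hEpos l (by omega))
  have hb : 0 < E r / E s := div_pos (hEpos r (by omega)) (hEpos s (by omega))
  have hA : (m : ℝ) - (l : ℝ) = ((m - l : ℕ) : ℝ) := by
    rw [Nat.cast_sub hml.le]
  have hB : (r : ℝ) - (s : ℝ) = ((r - s : ℕ) : ℝ) := by
    rw [Nat.cast_sub hrs.le]
  show (E m / E l) ^ (1 / ((m : ℝ) - (l : ℝ))) ≤ (E r / E s) ^ (1 / ((r : ℝ) - (s : ℝ)))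
  rw [hA, hB]
  have hA0 : (0:ℝ) < ((m - l : ℕ) : ℝ) := by
    have : 0 < m - l := by omega
    exact_mod_cast this
  have hB0 : (0:ℝ) < ((r - s : ℕ) : ℝ) := by
    have : 0 < r - s := by omega
    exact_mod_cast this
  have key1 : (E m / E l) ^ ((1:ℝ) / ((m - l : ℕ) : ℝ))
      = ((E m / E l) ^ (r - s)) ^ ((1:ℝ) / (((m - l : ℕ) : ℝ) * ((r - s : ℕ) : ℝ))) := by
    rw [← Real.rpow_natCast (E m / E l) (r - s), ← Real.rpow_mul ha.le]
    congr 1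
    field_simp
  have key2 : (E r / E s) ^ ((1:ℝ) / ((r - s : ℕ) : ℝ))
      = ((E r / E s) ^ (m - l)) ^ ((1:ℝ) / (((m - l : ℕ) : ℝ) * ((r - s : ℕ) : ℝ))) := by
    rw [← Real.rpow_natCast (E r / E s) (m - l), ← Real.rpow_mul hb.le]
    congr 1
    field_simp
  rw [key1, key2]
  exact Real.rpow_le_rpow (pow_nonneg ha.le _) hbox (by positivity)
end

section
/- Let 1 ≤ p ≤ n, N = C(n,p), and 0 ≤ l < k ≤ N be integers, let c > 0, and let κ ∈ P_{p,k} satisfy κ_i ≥ c for all 1 ≤ i ≤ n. Then σ_k(Λ(κ))/σ_l(Λ(κ)) ≥ (C(N,k)/C(N,l)) · (p c)^{k−l}. -/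
/-- The vector `Λ(κ) ∈ ℝ^N`, indexed by increasing `p`-multi-indices `I ⊆ {1,…,n}`,
with components `Λ_I(κ) = ∑_{i ∈ I} κ_i`. -/
noncomputable def LamVec (n p : ℕ) (κ : Fin n → ℝ) : {s : Finset (Fin n) // s.card = p} → ℝ :=
  fun I => ∑ i ∈ I.1, κ i

/-- The `(p,k)`-cone `P_{p,k} ⊆ ℝ^n`. -/
def Pcone (n p k : ℕ) : Set (Fin n → ℝ) :=
  {κ | ∀ j : ℕ, 1 ≤ j → j ≤ k → 0 < sigmaE j (LamVec n p κ)}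

open Finset

section ElementarySymmetric

variable {ι : Type*} [Fintype ι] [DecidableEq ι]

theorem choose_mul_sigmaE_eq_sum_sum_superset (k l : ℕ) (x : ι → ℝ) :
    (k.choose l : ℝ) * sigmaE k x =
      ∑ t ∈ univ.powersetCard l,
        ∑ s ∈ (univ.powersetCard k).filter (t ⊆ ·), ∏ i ∈ s, x i := by
  have hcount : (k.choose l : ℝ) * sigmaE k x =
      ∑ s ∈ univ.powersetCard k, ∑ _t ∈ s.powersetCard l, ∏ i ∈ s, x i := by
    rw [sigmaE, sigmaEOn, mul_sum]
    refine sum_congr rfl fun s hs => ?_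
    rw [sum_const, card_powersetCard, (mem_powersetCard.mp hs).2, nsmul_eq_mul]
  rw [hcount]
  refine sum_comm' fun s t => ?_
  simp only [mem_powersetCard, mem_filter, subset_univ, true_and]
  tauto

theorem choose_mul_pow_mul_prod_le_sum_superset {k l : ℕ} (hlk : l ≤ k) {m : ℝ} (hm : 0 ≤ m)
    {x : ι → ℝ} (hx : ∀ i, m ≤ x i) {t : Finset ι} (ht : t.card = l) :
    ((Fintype.card ι - l).choose (k - l) : ℝ) * m ^ (k - l) * ∏ i ∈ t, x i ≤
      ∑ s ∈ (univ.powersetCard k).filter (t ⊆ ·), ∏ i ∈ s, x i := by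
  have hx0 : ∀ i, 0 ≤ x i := fun i => hm.trans (hx i)
  have hdisj : ∀ u ∈ (univ \ t).powersetCard (k - l), Disjoint u t := fun u hu =>
    disjoint_of_subset_left (mem_powersetCard.mp hu).1 sdiff_disjoint
  have hinj : Set.InjOn (· ∪ t) ((univ \ t).powersetCard (k - l) : Set (Finset ι)) :=
    fun u hu v hv huv => by
      rw [← union_sdiff_cancel_right (hdisj u hu), ← union_sdiff_cancel_right (hdisj v hv)]
      exact congrArg (· \ t) huv
  have himage : ((univ \ t).powersetCard (k - l)).image (· ∪ t) ⊆
      (univ.powersetCard k).filter (t ⊆ ·) := by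
    intro s hs
    obtain ⟨u, hu, rfl⟩ := mem_image.mp hs
    refine mem_filter.mpr ⟨mem_powersetCard.mpr ⟨subset_univ _, ?_⟩, subset_union_right⟩
    rw [card_union_of_disjoint (hdisj u hu), (mem_powersetCard.mp hu).2, ht]
    omega
  calc ((Fintype.card ι - l).choose (k - l) : ℝ) * m ^ (k - l) * ∏ i ∈ t, x i
      = ∑ u ∈ (univ \ t).powersetCard (k - l), m ^ (k - l) * ∏ i ∈ t, x i := by
        rw [sum_const, card_powersetCard, card_univ_sdiff, ht, nsmul_eq_mul, mul_assoc]
    _ ≤ ∑ u ∈ (univ \ t).powersetCard (k - l), ∏ i ∈ u ∪ t, x i := by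
        refine sum_le_sum fun u hu => ?_
        rw [prod_union (hdisj u hu), ← (mem_powersetCard.mp hu).2, ← prod_const]
        gcongr with i
        · exact prod_nonneg fun i _ => hx0 i
        · exact hx i
    _ = ∑ s ∈ ((univ \ t).powersetCard (k - l)).image (· ∪ t), ∏ i ∈ s, x i := by
        rw [sum_image hinj]
    _ ≤ ∑ s ∈ (univ.powersetCard k).filter (t ⊆ ·), ∏ i ∈ s, x i :=
        sum_le_sum_of_subset_of_nonneg himage fun s _ _ => prod_nonneg fun i _ => hx0 i

theorem choose_mul_pow_mul_sigmaE_le {k l : ℕ} (hlk : l ≤ k) {m : ℝ} (hm : 0 ≤ m)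
    {x : ι → ℝ} (hx : ∀ i, m ≤ x i) :
    ((Fintype.card ι - l).choose (k - l) : ℝ) * m ^ (k - l) * sigmaE l x ≤
      (k.choose l : ℝ) * sigmaE k x := by
  rw [choose_mul_sigmaE_eq_sum_sum_superset, sigmaE, sigmaEOn, mul_sum]
  exact sum_le_sum fun t ht =>
    choose_mul_pow_mul_prod_le_sum_superset hlk hm hx (mem_powersetCard.mp ht).2

theorem sigmaE_pos {k : ℕ} (hk : k ≤ Fintype.card ι) {x : ι → ℝ} (hx : ∀ i, 0 < x i) :
    0 < sigmaE k x :=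
  sum_pos (fun t _ => prod_pos fun i _ => hx i) (powersetCard_nonempty.mpr (by simpa using hk))

theorem choose_div_choose_mul_pow_le_sigmaE_div {k l : ℕ} (hlk : l ≤ k)
    (hk : k ≤ Fintype.card ι) {m : ℝ} (hm : 0 < m) {x : ι → ℝ} (hx : ∀ i, m ≤ x i) :
    ((Fintype.card ι).choose k : ℝ) / ((Fintype.card ι).choose l : ℝ) * m ^ (k - l) ≤
      sigmaE k x / sigmaE l x := by
  set M := Fintype.card ι
  have hσl : 0 < sigmaE l x := sigmaE_pos (hlk.trans hk) fun i => hm.trans_le (hx i)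
  have hratio : (M.choose k : ℝ) / M.choose l = ((M - l).choose (k - l) : ℝ) / k.choose l := by
    rw [div_eq_div_iff (by exact_mod_cast (Nat.choose_pos (hlk.trans hk)).ne')
      (by exact_mod_cast (Nat.choose_pos hlk).ne')]
    exact_mod_cast (Nat.choose_mul hlk).trans (mul_comm _ _)
  rw [hratio, div_mul_eq_mul_div, div_le_div_iff₀ (by exact_mod_cast Nat.choose_pos hlk) hσl]
  linarith [choose_mul_pow_mul_sigmaE_le hlk hm.le hx]

end ElementarySymmetric

theorem mul_le_lamVec {n p : ℕ} {c : ℝ} {κ : Fin n → ℝ} (hκ : ∀ i, c ≤ κ i)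
    (I : {s : Finset (Fin n) // s.card = p}) : (p : ℝ) * c ≤ LamVec n p κ I := by
  simpa [LamVec, I.2] using sum_le_sum fun i (_ : i ∈ I.1) => hκ i

theorem quotient_lower_bound_general (n p k l N : ℕ) (hp1 : 1 ≤ p)
    (hN : N = n.choose p) (hlk : l < k) (hkN : k ≤ N)
    (c : ℝ) (hc : 0 < c) (κ : Fin n → ℝ)
    (hbound : ∀ i : Fin n, c ≤ κ i) :
    (N.choose k : ℝ) / (N.choose l : ℝ) * ((p : ℝ) * c) ^ (k - l) ≤
      sigmaE k (LamVec n p κ) / sigmaE l (LamVec n p κ) := by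
  obtain rfl : N = Fintype.card {s : Finset (Fin n) // s.card = p} := by
    rw [Fintype.card_finset_len, Fintype.card_fin, hN]
  exact choose_div_choose_mul_pow_le_sigmaE_div hlk.le hkN (mul_pos (by exact_mod_cast hp1) hc)
    (mul_le_lamVec hbound)

/-- if `κ ∈ P_{p,k}` and `κ_i ≥ c > 0` for all `i`, then
`σ_k(Λ(κ))/σ_l(Λ(κ)) ≥ (C(N,k)/C(N,l)) (p c)^{k−l}`. -/
theorem quotient_lower_bound (n p k l N : ℕ) (hp1 : 1 ≤ p) (hpn : p ≤ n)
    (hN : N = n.choose p) (hlk : l < k) (hkN : k ≤ N)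
    (c : ℝ) (hc : 0 < c) (κ : Fin n → ℝ) (hκ : κ ∈ Pcone n p k)
    (hbound : ∀ i : Fin n, c ≤ κ i) :
    (N.choose k : ℝ) / (N.choose l : ℝ) * ((p : ℝ) * c) ^ (k - l) ≤
      sigmaE k (LamVec n p κ) / sigmaE l (LamVec n p κ) :=
  quotient_lower_bound_general n p k l N hp1 hN hlk hkN c hc κ hbound
end

section
/- Let 0 ≤ l < k ≤ n be integers and let λ ∈ Γ_k. Then (l+1) σ_k(λ) σ_{l+1}(λ) − (k+1) σ_{k+1}(λ) σ_l(λ) ≥ (k−l) · (C(n,l)/C(n,k))^{1/(k−l)} · σ_k(λ)^{(k−l+1)/(k−l)} · σ_l(λ)^{(k−l−1)/(k−l)}, with the convention σ_{n+1} = 0 when k = n. -/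
open Finset Polynomial

theorem sq_sum_eq_sum_sq_add_two_mul_sum_powersetCard_two {ι R : Type*} [DecidableEq ι]
    [CommSemiring R] (u : Finset ι) (q : ι → R) :
    (∑ i ∈ u, q i) ^ 2
      = ∑ i ∈ u, q i ^ 2 + 2 * ∑ t ∈ u.powersetCard 2, ∏ i ∈ t, q i := by
  induction u using Finset.induction with
  | empty => rw [powersetCard_eq_empty.2 (by simp)]; simp
  | @insert a u ha ih =>
    have hinj : Set.InjOn (insert a) (u.powersetCard 1 : Set (Finset ι)) :=
      fun s hs t ht hst => by
      rw [← erase_insert (fun h => ha ((mem_powersetCard.1 hs).1 h)), hst,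
        erase_insert (fun h => ha ((mem_powersetCard.1 ht).1 h))]
    have hdisj : Disjoint (u.powersetCard 2) ((u.powersetCard 1).image (insert a)) := by
      simp only [disjoint_left, mem_image, not_exists, not_and]
      exact fun s hs t _ hts => ha ((mem_powersetCard.1 hs).1 (hts ▸ mem_insert_self a t))
    have hpairs :
        ∑ t ∈ u.powersetCard 1, ∏ i ∈ insert a t, q i = q a * ∑ i ∈ u, q i := by
      rw [powersetCard_one, sum_map, mul_sum]
      refine sum_congr rfl fun i hi => ?_
      exact prod_pair (by rintro rfl; exact ha hi)
    rw [sum_insert ha, sum_insert ha, powersetCard_succ_insert ha, sum_union hdisj,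
      sum_image hinj, hpairs, add_sq, ih]
    ring

theorem sigmaEOn_card_sub {ι : Type*} [DecidableEq ι] (u : Finset ι) (x : ι → ℝ) {j : ℕ}
    (hj : j ≤ #u) : sigmaEOn u (#u - j) x = ∑ s ∈ u.powersetCard j, ∏ i ∈ u \ s, x i := by
  rw [sigmaEOn]
  refine sum_nbij' (u \ ·) (u \ ·) (fun t ht => ?_) (fun s hs => ?_) (fun t ht => ?_)
    (fun s hs => ?_) (fun t ht => ?_)
  all_goals simp only [mem_powersetCard] at *
  · exact ⟨sdiff_subset, by rw [card_sdiff_of_subset ht.1, ht.2]; omega⟩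
  · exact ⟨sdiff_subset, by rw [card_sdiff_of_subset hs.1, hs.2]⟩
  · exact Finset.sdiff_sdiff_eq_self ht.1
  · exact Finset.sdiff_sdiff_eq_self hs.1
  · rw [Finset.sdiff_sdiff_eq_self ht.1]

theorem prod_mul_prod_sdiff_pair {ι M : Type*} [DecidableEq ι] [CommMonoid M] {u : Finset ι}
    (x : ι → M) {i j : ι} (hi : i ∈ u) (hj : j ∈ u) (hij : i ≠ j) :
    (∏ a ∈ u, x a) * ∏ a ∈ u \ {i, j}, x a
      = (∏ a ∈ u.erase i, x a) * ∏ a ∈ u.erase j, x a := by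
  have hsub : ({i, j} : Finset ι) ⊆ u := insert_subset hi (singleton_subset_iff.2 hj)
  have hrest : (u.erase j).erase i = u \ {i, j} := by ext; simp; tauto
  rw [← prod_sdiff hsub, ← mul_prod_erase _ _ (mem_erase.2 ⟨hij.symm, hj⟩),
    ← mul_prod_erase _ _ (mem_erase.2 ⟨hij, hi⟩), erase_right_comm, prod_pair hij, hrest]
  ac_rfl

theorem two_mul_card_mul_sigmaEOn_le {ι : Type*} [DecidableEq ι] (u : Finset ι) (x : ι → ℝ)
    (hu : 2 ≤ #u) :
    2 * #u * (sigmaEOn u #u x * sigmaEOn u (#u - 2) x)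
      ≤ (#u - 1 : ℝ) * sigmaEOn u (#u - 1) x ^ 2 := by
  set q : ι → ℝ := fun i => ∏ j ∈ u.erase i, x j
  have htop : sigmaEOn u #u x = ∏ i ∈ u, x i := by
    rw [sigmaEOn, powersetCard_self, sum_singleton]
  have hsub_one : sigmaEOn u (#u - 1) x = ∑ i ∈ u, q i := by
    rw [sigmaEOn_card_sub u x (by omega), powersetCard_one, sum_map]
    exact sum_congr rfl fun i _ => by simp [q, sdiff_singleton_eq_erase]
  have hsub_two : sigmaEOn u #u x * sigmaEOn u (#u - 2) x =
      ∑ t ∈ u.powersetCard 2, ∏ i ∈ t, q i := by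
    rw [sigmaEOn_card_sub u x hu, mul_sum, htop]
    refine sum_congr rfl fun t ht => ?_
    obtain ⟨htu, htcard⟩ := mem_powersetCard.1 ht
    obtain ⟨i, j, hij, rfl⟩ := card_eq_two.1 htcard
    rw [prod_pair hij]
    exact prod_mul_prod_sdiff_pair x (htu (by simp)) (htu (by simp)) hij
  have hcs : (∑ i ∈ u, q i) ^ 2 ≤ #u * ∑ i ∈ u, q i ^ 2 := sq_sum_le_card_mul_sum_sq
  have hexp := sq_sum_eq_sum_sq_add_two_mul_sum_powersetCard_two u q
  have hu1 : (1 : ℝ) ≤ #u := by exact_mod_cast (by omega : 1 ≤ #u)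
  rw [hsub_one, hsub_two]
  nlinarith [sq_nonneg (∑ i ∈ u, q i)]

theorem Multiset.two_mul_card_mul_esymm_le (s : Multiset ℝ) (hs : 2 ≤ card s) :
    2 * card s * (s.esymm (card s) * s.esymm (card s - 2))
      ≤ (card s - 1 : ℝ) * s.esymm (card s - 1) ^ 2 := by
  classical
  have h := two_mul_card_mul_sigmaEOn_le s.toEnumFinset Prod.fst (by rwa [card_toEnumFinset])
  simpa only [sigmaEOn, ← Finset.esymm_map_val, map_toEnumFinset_fst, card_toEnumFinset] using h

theorem Polynomial.Splits.derivative {f : ℝ[X]} (hf : f.Splits) : f.derivative.Splits := by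
  rw [splits_iff_card_roots] at hf ⊢
  have := f.card_roots_le_derivative
  have := card_roots' f.derivative
  have := natDegree_derivative f
  omega

section Coefficients

variable {R : Type*} [CommRing R] [IsDomain R] {f : R[X]}

theorem Polynomial.Splits.coeff_mul_coeff_add_two (hf : f.Splits) {i : ℕ}
    (hi : i + 2 ≤ f.natDegree) :
    f.coeff i * f.coeff (i + 2) = f.leadingCoeff ^ 2 *
      (f.roots.esymm (f.natDegree - i) * f.roots.esymm (f.natDegree - (i + 2))) := by
  have hcard := splits_iff_card_roots.1 hf
  rw [coeff_eq_esymm_roots_of_card hcard (by omega), coeff_eq_esymm_roots_of_card hcard hi,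
    show f.natDegree - i = f.natDegree - (i + 2) + 2 by omega]
  ring_nf
  simp [pow_mul']

theorem Polynomial.Splits.coeff_sq (hf : f.Splits) {i : ℕ} (hi : i ≤ f.natDegree) :
    f.coeff i ^ 2 = f.leadingCoeff ^ 2 * f.roots.esymm (f.natDegree - i) ^ 2 := by
  rw [coeff_eq_esymm_roots_of_card (splits_iff_card_roots.1 hf) hi, mul_pow, mul_pow,
    ← pow_mul, mul_comm _ 2, pow_mul]
  simp

end Coefficients

theorem cast_choose_succ_eq_mul_div {n : ℕ} (hn : n ≠ 0) (t : ℕ) :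
    (n.choose (t + 1) : ℝ) = n * (n - 1).choose t / (t + 1) := by
  have h := Nat.add_one_mul_choose_eq (n - 1) t
  rw [Nat.sub_add_cancel (Nat.one_le_iff_ne_zero.2 hn)] at h
  rw [eq_div_iff (by positivity)]
  exact_mod_cast h.symm

theorem Polynomial.Splits.choose_sq_mul_coeff_mul_coeff_le {f : ℝ[X]} (hf : f.Splits) {i : ℕ}
    (hi : i + 2 ≤ f.natDegree) :
    (f.natDegree.choose (i + 1) : ℝ) ^ 2 * (f.coeff i * f.coeff (i + 2)) ≤
      f.natDegree.choose i * f.natDegree.choose (i + 2) * f.coeff (i + 1) ^ 2 := by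
  induction i generalizing f with
  | zero =>
    have hbase := f.roots.two_mul_card_mul_esymm_le
      (by rw [← hf.natDegree_eq_card_roots]; omega)
    rw [← hf.natDegree_eq_card_roots] at hbase
    rw [hf.coeff_mul_coeff_add_two hi, hf.coeff_sq (by omega), Nat.choose_one_right,
      Nat.choose_zero_right, Nat.cast_choose_two]
    simp only [zero_add, Nat.sub_zero, Nat.cast_one, one_mul]
    nlinarith [mul_le_mul_of_nonneg_left hbase
      (by positivity : (0 : ℝ) ≤ f.natDegree * f.leadingCoeff ^ 2)]
  | succ i ih =>
    -- The normalised coefficient `coeff t / choose n t` of `f'` is `n` times that of `f`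
    -- at `t + 1`, so the inequality for `f'` at `i` is the one for `f` at `i + 1`.
    set n := f.natDegree
    have hn : n ≠ 0 := by omega
    have h := ih hf.derivative (by rw [natDegree_derivative]; omega)
    simp only [natDegree_derivative, coeff_derivative] at h
    rw [cast_choose_succ_eq_mul_div hn i, cast_choose_succ_eq_mul_div hn (i + 1),
      cast_choose_succ_eq_mul_div hn (i + 2), div_pow, div_mul_div_comm, div_mul_eq_mul_div,
      div_mul_eq_mul_div, div_le_div_iff₀ (by positivity) (by positivity)]
    push_cast at h ⊢
    nlinarith [mul_le_mul_of_nonneg_left h (sq_nonneg (n : ℝ))]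

theorem Multiset.choose_sq_mul_esymm_mul_esymm_le (s : Multiset ℝ) {j : ℕ}
    (hj : j + 2 ≤ card s) :
    ((card s).choose (j + 1) : ℝ) ^ 2 * (s.esymm j * s.esymm (j + 2)) ≤
      (card s).choose j * (card s).choose (j + 2) * s.esymm (j + 1) ^ 2 := by
  set f : ℝ[X] := (s.map fun a => X - C a).prod
  have hdeg : f.natDegree = card s := natDegree_multiset_prod_X_sub_C_eq_card s
  have hroots : f.roots = s := roots_multiset_prod_X_sub_C s
  have hlead : f.leadingCoeff = 1 := (monic_multiset_prod_of_monic _ _ fun a _ => monic_X_sub_C a)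
  have hf : f.Splits := splits_iff_card_roots.2 (by rw [hroots, hdeg])
  have h := hf.choose_sq_mul_coeff_mul_coeff_le (i := card s - (j + 2)) (by omega)
  rw [hf.coeff_mul_coeff_add_two (by omega), hf.coeff_sq (by omega), hdeg, hroots, hlead] at h
  rw [show card s - (j + 2) + 1 = card s - (j + 1) by omega,
    show card s - (j + 2) + 2 = card s - j by omega, Nat.choose_symm (by omega),
    Nat.choose_symm (by omega), Nat.choose_symm (by omega),
    Nat.sub_sub_self (by omega : j ≤ card s),
    Nat.sub_sub_self (by omega : j + 1 ≤ card s), Nat.sub_sub_self hj] at h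
  linarith

section LogConcave

variable {P : ℕ → ℝ} {k l : ℕ}

theorem ratio_antitoneOn (hP : ∀ j, P j * P (j + 2) ≤ P (j + 1) ^ 2)
    (hpos : ∀ j ≤ k, 0 < P j) :
    AntitoneOn (fun j => P (j + 1) / P j) (Set.Iic k) := by
  refine antitoneOn_of_succ_le Set.ordConnected_Iic fun j _ _ hj => ?_
  simp only [Order.succ_eq_add_one, Set.mem_Iic] at hj ⊢
  rw [div_le_div_iff₀ (hpos _ hj) (hpos _ (by omega))]
  nlinarith [hP j]

theorem div_eq_prod_ratio (hpos : ∀ j ≤ k, 0 < P j) (hlk : l ≤ k) :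
    P k / P l = ∏ j ∈ Ico l k, P (j + 1) / P j := by
  induction k, hlk using Nat.le_induction with
  | base => simp [(hpos l le_rfl).ne']
  | succ k hlk ih =>
    rw [prod_Ico_succ_top hlk, ← ih fun j hj => hpos j (by omega),
      div_mul_div_cancel₀' (hpos k (by omega)).ne']

theorem div_le_ratio_pow (hP : ∀ j, P j * P (j + 2) ≤ P (j + 1) ^ 2)
    (hpos : ∀ j ≤ k, 0 < P j) (hlk : l ≤ k) : P k / P l ≤ (P (l + 1) / P l) ^ (k - l) := by
  rw [div_eq_prod_ratio hpos hlk, ← Nat.card_Ico, ← prod_const]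
  refine prod_le_prod (fun j hj => ?_) fun j hj => ?_ <;> rw [mem_Ico] at hj
  · exact (div_pos (hpos _ (by omega)) (hpos _ (by omega))).le
  · exact ratio_antitoneOn hP hpos (by simp; omega) (by simp; omega) hj.1

theorem ratio_pow_le_div (hP : ∀ j, P j * P (j + 2) ≤ P (j + 1) ^ 2)
    (hpos : ∀ j ≤ k, 0 < P j) (hlk : l ≤ k) (hk : 0 ≤ P (k + 1)) :
    (P (k + 1) / P k) ^ (k - l) ≤ P k / P l := by
  rw [div_eq_prod_ratio hpos hlk, ← Nat.card_Ico, ← prod_const]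
  refine prod_le_prod (fun j _ => div_nonneg hk (hpos k le_rfl).le) fun j hj => ?_
  rw [mem_Ico] at hj
  exact ratio_antitoneOn hP hpos (by simp; omega) (by simp) hj.2.le

theorem one_div_sub_eq_inv_natCast_sub (hlk : l ≤ k) :
    1 / ((k : ℝ) - l) = ((k - l : ℕ) : ℝ)⁻¹ := by
  rw [Nat.cast_sub hlk, one_div]

theorem rpow_div_le_ratio (hP : ∀ j, P j * P (j + 2) ≤ P (j + 1) ^ 2)
    (hpos : ∀ j ≤ k, 0 < P j) (hlk : l < k) :
    (P k / P l) ^ (1 / ((k : ℝ) - l)) ≤ P (l + 1) / P l := by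
  have hl : 0 < P l := hpos l hlk.le
  have hratio : 0 < P (l + 1) / P l := div_pos (hpos _ hlk) hl
  rw [one_div_sub_eq_inv_natCast_sub hlk.le]
  calc (P k / P l) ^ ((k - l : ℕ) : ℝ)⁻¹
      ≤ ((P (l + 1) / P l) ^ (k - l)) ^ ((k - l : ℕ) : ℝ)⁻¹ :=
        Real.rpow_le_rpow (div_pos (hpos k le_rfl) hl).le (div_le_ratio_pow hP hpos hlk.le)
          (by positivity)
    _ = P (l + 1) / P l := Real.pow_rpow_inv_natCast hratio.le (by omega)

theorem ratio_le_rpow_div (hP : ∀ j, P j * P (j + 2) ≤ P (j + 1) ^ 2)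
    (hpos : ∀ j ≤ k, 0 < P j) (hlk : l < k) :
    P (k + 1) / P k ≤ (P k / P l) ^ (1 / ((k : ℝ) - l)) := by
  have hk : 0 < P k := hpos k le_rfl
  rcases le_or_gt (P (k + 1)) 0 with hk1 | hk1
  · exact (div_nonpos_of_nonpos_of_nonneg hk1 hk.le).trans
      (Real.rpow_nonneg (div_pos hk (hpos l hlk.le)).le _)
  rw [one_div_sub_eq_inv_natCast_sub hlk.le]
  calc P (k + 1) / P k = ((P (k + 1) / P k) ^ (k - l)) ^ ((k - l : ℕ) : ℝ)⁻¹ :=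
        (Real.pow_rpow_inv_natCast (div_pos hk1 hk).le (by omega)).symm
    _ ≤ (P k / P l) ^ ((k - l : ℕ) : ℝ)⁻¹ :=
        Real.rpow_le_rpow (by positivity) (ratio_pow_le_div hP hpos hlk.le hk1.le) (by positivity)

theorem sub_mul_mul_rpow_le (hP : ∀ j, P j * P (j + 2) ≤ P (j + 1) ^ 2)
    (hpos : ∀ j ≤ k, 0 < P j) (hlk : l < k) {N : ℝ} (hN : (k : ℝ) ≤ N) :
    ((k : ℝ) - l) * (P l * P k * (P k / P l) ^ (1 / ((k : ℝ) - l)))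
      ≤ (N - l) * (P k * P (l + 1)) - (N - k) * (P (k + 1) * P l) := by
  set ρ := (P k / P l) ^ (1 / ((k : ℝ) - l))
  have hl : 0 < P l := hpos l hlk.le
  have hk : 0 < P k := hpos k le_rfl
  have hup : ρ * P l ≤ P (l + 1) := (le_div_iff₀ hl).1 (rpow_div_le_ratio hP hpos hlk)
  have hlow : P (k + 1) ≤ ρ * P k := (div_le_iff₀ hk).1 (ratio_le_rpow_div hP hpos hlk)
  have hlN : (l : ℝ) ≤ k := by exact_mod_cast hlk.le
  nlinarith [mul_le_mul_of_nonneg_left hup (mul_nonneg hk.le (by linarith : (0 : ℝ) ≤ N - l)),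
    mul_le_mul_of_nonneg_left hlow (mul_nonneg hl.le (by linarith : (0 : ℝ) ≤ N - k))]

end LogConcave

section SymmetricMean

variable {ι : Type*} [Fintype ι] [DecidableEq ι]

/-- For `k > card ι` both `σ_k` and the binomial coefficient vanish, so `sigmaMean k x = 0`;
this is why Newton's inequality `sigmaMean_mul_sigmaMean_le_sq` needs no restriction on `j`. -/
noncomputable def sigmaMean (k : ℕ) (x : ι → ℝ) : ℝ :=
  sigmaE k x / (Fintype.card ι).choose k

theorem sigmaE_eq_esymm (k : ℕ) (x : ι → ℝ) : sigmaE k x = (univ.val.map x).esymm k := by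
  rw [sigmaE, sigmaEOn, esymm_map_val]

theorem sigmaE_zero (x : ι → ℝ) : sigmaE 0 x = 1 := by
  simp [sigmaE, sigmaEOn]

theorem sigmaE_of_card_lt {k : ℕ} (x : ι → ℝ) (hk : Fintype.card ι < k) :
    sigmaE k x = 0 := by
  rw [sigmaE, sigmaEOn, powersetCard_eq_empty.2 (by simpa using hk), sum_empty]

theorem sigmaE_eq_choose_mul_sigmaMean (k : ℕ) (x : ι → ℝ) :
    sigmaE k x = (Fintype.card ι).choose k * sigmaMean k x := by
  rcases le_or_gt k (Fintype.card ι) with hk | hk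
  · rw [sigmaMean, mul_div_cancel₀ _ (by exact_mod_cast (Nat.choose_pos hk).ne')]
  · rw [sigmaE_of_card_lt x hk, Nat.choose_eq_zero_of_lt hk, Nat.cast_zero, zero_mul]

theorem sigmaMean_mul_sigmaMean_le_sq (x : ι → ℝ) (j : ℕ) :
    sigmaMean j x * sigmaMean (j + 2) x ≤ sigmaMean (j + 1) x ^ 2 := by
  set n := Fintype.card ι
  rcases le_or_gt (j + 2) n with hj | hj
  · have h := (univ.val.map x).choose_sq_mul_esymm_mul_esymm_le (by simpa using hj)
    simp only [Multiset.card_map, card_val, card_univ, ← sigmaE_eq_esymm,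
      sigmaE_eq_choose_mul_sigmaMean] at h
    have hc : ∀ t ≤ n, (0 : ℝ) < n.choose t := fun t ht => by exact_mod_cast Nat.choose_pos ht
    have hpos : (0 : ℝ) < n.choose j * n.choose (j + 2) * n.choose (j + 1) ^ 2 := by
      have := hc j (by omega); have := hc (j + 1) (by omega); have := hc (j + 2) hj
      positivity
    refine le_of_mul_le_mul_left ?_ hpos
    linarith
  · have hzero : sigmaMean (j + 2) x = 0 := by
      rw [sigmaMean, Nat.choose_eq_zero_of_lt hj, Nat.cast_zero, div_zero]
    rw [hzero, mul_zero]
    positivity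

end SymmetricMean

theorem sigmaMean_pos_of_mem_gardingCone {n k j : ℕ} {lam : Fin n → ℝ}
    (hlam : lam ∈ gardingCone n k) (hkn : k ≤ n) (hj : j ≤ k) : 0 < sigmaMean j lam := by
  rw [sigmaMean, Fintype.card_fin]
  rcases j with _ | j
  · simp [sigmaE_zero]
  · exact div_pos (hlam _ (by omega) hj) (by exact_mod_cast Nat.choose_pos (by omega))

theorem succ_mul_cast_choose_succ {n j : ℕ} (hj : j ≤ n) :
    ((j : ℝ) + 1) * n.choose (j + 1) = (n - j) * n.choose j := by
  have h := Nat.choose_succ_right_eq n j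
  rw [← Nat.cast_sub hj]
  exact_mod_cast (mul_comm _ _).trans (h.trans (mul_comm _ _))

theorem rpow_one_div_mul_rpow_mul_rpow {x y c m : ℝ} (hx : 0 < x) (hy : 0 < y) (hc : 0 ≤ c)
    (hm : m ≠ 0) :
    c ^ (1 / m) * y ^ ((m + 1) / m) * x ^ ((m - 1) / m) = x * y * (c * y / x) ^ (1 / m) := by
  rw [Real.div_rpow (by positivity) hx.le, Real.mul_rpow hc hy.le,
    show (m + 1) / m = 1 + 1 / m by field_simp, show (m - 1) / m = 1 - 1 / m by field_simp,
    Real.rpow_add hy, Real.rpow_sub hx, Real.rpow_one, Real.rpow_one]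
  field_simp

/-- for `λ ∈ Γ_k`,
`(l+1) σ_k σ_{l+1} − (k+1) σ_{k+1} σ_l ≥ (k−l)(C(n,l)/C(n,k))^{1/(k−l)} σ_k^{(k−l+1)/(k−l)} σ_l^{(k−l−1)/(k−l)}`. -/
theorem sigma_identity_lower_bound (n k l : ℕ) (hlk : l < k) (hkn : k ≤ n)
    (lam : Fin n → ℝ) (hlam : lam ∈ gardingCone n k) :
    ((k : ℝ) - (l : ℝ)) * ((n.choose l : ℝ) / (n.choose k : ℝ)) ^ (1 / ((k : ℝ) - (l : ℝ)))
        * sigmaE k lam ^ (((k : ℝ) - (l : ℝ) + 1) / ((k : ℝ) - (l : ℝ)))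
        * sigmaE l lam ^ (((k : ℝ) - (l : ℝ) - 1) / ((k : ℝ) - (l : ℝ)))
      ≤ ((l : ℝ) + 1) * sigmaE k lam * sigmaE (l + 1) lam
        - ((k : ℝ) + 1) * sigmaE (k + 1) lam * sigmaE l lam := by
  set E : ℕ → ℝ := fun j => sigmaMean j lam
  have hE : ∀ j ≤ k, 0 < E j := fun j => sigmaMean_pos_of_mem_gardingCone hlam hkn
  have hσ : ∀ j, sigmaE j lam = n.choose j * E j := fun j => by
    simpa using sigmaE_eq_choose_mul_sigmaMean j lam
  have hCl : (0 : ℝ) < n.choose l := by exact_mod_cast Nat.choose_pos (by omega)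
  have hCk : (0 : ℝ) < n.choose k := by exact_mod_cast Nat.choose_pos hkn
  have hkey := sub_mul_mul_rpow_le (sigmaMean_mul_sigmaMean_le_sq lam) hE hlk
    (N := n) (by exact_mod_cast hkn)
  have hratio : (n.choose l : ℝ) / n.choose k * sigmaE k lam / sigmaE l lam = E k / E l := by
    rw [hσ k, hσ l]
    field_simp
  rw [mul_assoc, mul_assoc, ← mul_assoc (_ ^ _),
    rpow_one_div_mul_rpow_mul_rpow (by rw [hσ]; exact mul_pos hCl (hE l hlk.le))
      (by rw [hσ]; exact mul_pos hCk (hE k le_rfl)) (by positivity)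
      (sub_pos.2 (Nat.cast_lt.2 hlk)).ne',
    hratio, hσ l, hσ k, hσ (l + 1), hσ (k + 1)]
  calc _ = n.choose l * n.choose k
          * (((k : ℝ) - l) * (E l * E k * (E k / E l) ^ (1 / ((k : ℝ) - l)))) := by ring
    _ ≤ n.choose l * n.choose k * ((n - l) * (E k * E (l + 1)) - (n - k) * (E (k + 1) * E l)) :=
      mul_le_mul_of_nonneg_left hkey (by positivity)
    _ = _ := by
      linear_combination
        (-(n.choose k * E k * E (l + 1))) * succ_mul_cast_choose_succ (hlk.le.trans hkn)
        + (n.choose l * E (k + 1) * E l) * succ_mul_cast_choose_succ hkn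
end

section
/- Let A be a diagonal n×n real matrix with diagonal vector λ, and let 1 ≤ m ≤ n. Viewing E_m as a polynomial function of the n² matrix entries, the following hold at A: ∂E_m/∂A_{ii} = σ_{m−1}(λ|i) for each i; ∂E_m/∂A_{ij} = 0 for i ≠ j; ∂²E_m/∂A_{ii}∂A_{jj} = σ_{m−2}(λ|ij) for i ≠ j; ∂²E_m/∂A_{ij}∂A_{ji} = −σ_{m−2}(λ|ij) for i ≠ j; and all other second partial derivatives ∂²E_m/∂A_{ij}∂A_{pq} vanish at A. -/
/-- Elementary symmetric function with integer index: `σ_j = 0` for `j < 0`. -/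
noncomputable def sigmaEIntOn {ι : Type*} [DecidableEq ι] (s : Finset ι) (k : ℤ) (x : ι → ℝ) : ℝ :=
  if 0 ≤ k then sigmaEOn s k.toNat x else 0

noncomputable def sigmaEInt {ι : Type*} [Fintype ι] [DecidableEq ι] (k : ℤ) (x : ι → ℝ) : ℝ :=
  sigmaEIntOn Finset.univ k x

/-- `E_j(M)`: the sum of all principal `j × j` minors of `M`, i.e. the `j`-th
elementary symmetric function of the eigenvalues of `M`. -/
noncomputable def Ematrix {ι : Type*} [Fintype ι] [DecidableEq ι] (j : ℕ) (M : Matrix ι ι ℝ) : ℝ :=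
  ∑ s ∈ Finset.univ.powersetCard j,
    Matrix.det (M.submatrix (Subtype.val : {x // x ∈ s} → ι) (Subtype.val : {x // x ∈ s} → ι))

/-- `E_m` viewed as a (polynomial) function of the `n²` matrix entries. -/
noncomputable def Efun (n m : ℕ) (a : Fin n → Fin n → ℝ) : ℝ :=
  Ematrix m (Matrix.of a)

/-- The diagonal matrix with diagonal vector `λ`, as a function of two indices. -/
def diagFun (n : ℕ) (lam : Fin n → ℝ) : Fin n → Fin n → ℝ :=
  fun i j => if i = j then lam i else 0

/-!
`E_m(B)` is the sum of the principal minors `det B_S` over `|S| = m`, so it suffices to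
differentiate the Leibniz expansion `det M = ∑_σ sgn σ ∏_l M (σ l) l` twice. At a diagonal
matrix, a Leibniz monomial with one (resp. two) factors removed survives only if `σ` fixes
every remaining index, which forces `σ = 1` (resp. `σ ∈ {1, (k k')}`). Hence the first
derivative of `det` at `diag d` in direction `w` is `∑_k ∏_{l ≠ k} d_l w_kk`, and the second
is `∑_{k ≠ k'} ∏_{l ≠ k, k'} d_l (w_kk v_k'k' - w_k'k v_kk')`. For unit directions only the
subsets `S` containing the indices involved contribute, and summing over them yields
`σ_{m-1}(λ|i)` and `σ_{m-2}(λ|ij)`.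
-/

open Finset Equiv Matrix

local notation "E[" p ", " q "]" => (Pi.single p (Pi.single q (1 : ℝ)) : _ → _ → ℝ)

namespace Equiv.Perm

variable {κ : Type*} [DecidableEq κ] [Fintype κ] {σ : Perm κ}

theorem eq_one_of_forall_ne_apply_eq {k : κ} (h : ∀ l, l ≠ k → σ l = l) : σ = 1 :=
  card_support_le_one.mp <| card_le_one.mpr fun a ha b hb => by
    rw [mem_support] at ha hb
    exact (not_imp_comm.mp (h a) ha).trans (not_imp_comm.mp (h b) hb).symm

theorem eq_one_or_eq_swap_of_forall_ne_apply_eq {k k' : κ}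
    (h : ∀ l, l ≠ k → l ≠ k' → σ l = l) : σ = 1 ∨ σ = swap k k' := by
  have hσk : σ k = k ∨ σ k = k' := by
    by_contra! hne
    exact hne.1 (σ.injective (h _ hne.1 hne.2))
  rcases hσk with hk | hk
  · refine .inl (eq_one_of_forall_ne_apply_eq (k := k') fun l hl => ?_)
    by_cases hlk : l = k
    · exact hlk ▸ hk
    · exact h l hlk hl
  · refine .inr (eq_inv_of_mul_eq_one_right ?_ |>.trans (swap_inv k k'))
    refine eq_one_of_forall_ne_apply_eq (k := k') fun l hl => ?_
    by_cases hlk : l = k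
    · subst hlk; simp [hk]
    · simp [h l hlk hl, swap_apply_of_ne_of_ne hlk hl]

end Equiv.Perm

section EntryCLM

variable {𝕜 : Type*} [NontriviallyNormedField 𝕜] {ι κ : Type*}

def entryCLM (i j : ι) : (ι → ι → 𝕜) →L[𝕜] 𝕜 :=
  (ContinuousLinearMap.proj (R := 𝕜) (φ := fun _ : ι => 𝕜) j).comp
    (ContinuousLinearMap.proj (φ := fun _ : ι => ι → 𝕜) i)

@[simp]
theorem entryCLM_apply (i j : ι) (M : ι → ι → 𝕜) : entryCLM i j M = M i j := rfl

def submatrixCLM (e : κ → ι) : (ι → ι → 𝕜) →L[𝕜] (κ → κ → 𝕜) :=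
  ContinuousLinearMap.pi fun x => ContinuousLinearMap.pi fun y => entryCLM (e x) (e y)

@[simp]
theorem submatrixCLM_apply (e : κ → ι) (M : ι → ι → 𝕜) (x y : κ) :
    submatrixCLM e M x y = M (e x) (e y) := rfl

theorem submatrixCLM_diagonal [DecidableEq ι] [DecidableEq κ] {e : κ → ι}
    (he : Function.Injective e) (d : ι → 𝕜) :
    submatrixCLM e (diagonal d) = diagonal (d ∘ e) :=
  submatrix_diagonal d e he

end EntryCLM

section DetDerivative

variable {𝕜 : Type*} [NontriviallyNormedField 𝕜] {κ : Type*} [Fintype κ] [DecidableEq κ]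

theorem hasFDerivAt_prod_entries (σ : κ → κ) (t : Finset κ) (A : κ → κ → 𝕜) :
    HasFDerivAt (fun M : κ → κ → 𝕜 => ∏ l ∈ t, M (σ l) l)
      (∑ k ∈ t, (∏ l ∈ t.erase k, A (σ l) l) • entryCLM (σ k) k) A :=
  HasFDerivAt.finsetProd fun k _ =>
    ((entryCLM (𝕜 := 𝕜) (σ k) k).hasFDerivAt :
      HasFDerivAt (fun M : κ → κ → 𝕜 => M (σ k) k) _ A)

def detFDeriv (A : κ → κ → 𝕜) : (κ → κ → 𝕜) →L[𝕜] 𝕜 :=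
  ∑ σ : Perm κ, (Perm.sign σ : 𝕜) • ∑ k, (∏ l ∈ univ.erase k, A (σ l) l) • entryCLM (σ k) k

def detFDeriv2 (A w : κ → κ → 𝕜) : (κ → κ → 𝕜) →L[𝕜] 𝕜 :=
  ∑ σ : Perm κ, (Perm.sign σ : 𝕜) • ∑ k, w (σ k) k •
    ∑ k' ∈ univ.erase k, (∏ l ∈ (univ.erase k).erase k', A (σ l) l) • entryCLM (σ k') k'

theorem detFDeriv_apply (A w : κ → κ → 𝕜) :
    detFDeriv A w = ∑ σ : Perm κ, (Perm.sign σ : 𝕜) *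
      ∑ k, (∏ l ∈ univ.erase k, A (σ l) l) * w (σ k) k := by
  simp [detFDeriv]

theorem detFDeriv2_apply (A w v : κ → κ → 𝕜) :
    detFDeriv2 A w v = ∑ σ : Perm κ, (Perm.sign σ : 𝕜) * ∑ k, w (σ k) k *
      ∑ k' ∈ univ.erase k, (∏ l ∈ (univ.erase k).erase k', A (σ l) l) * v (σ k') k' := by
  simp [detFDeriv2]

theorem hasFDerivAt_det (A : κ → κ → 𝕜) :
    HasFDerivAt (fun M : κ → κ → 𝕜 => (of M).det) (detFDeriv A) A := by
  simp only [det_apply']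
  exact HasFDerivAt.fun_sum fun σ _ => (hasFDerivAt_prod_entries σ univ A).const_mul _

theorem hasFDerivAt_detFDeriv (A w : κ → κ → 𝕜) :
    HasFDerivAt (fun M => detFDeriv M w) (detFDeriv2 A w) A := by
  simp only [detFDeriv_apply]
  exact HasFDerivAt.fun_sum fun σ _ => .const_mul (HasFDerivAt.fun_sum fun k _ =>
    (hasFDerivAt_prod_entries σ (univ.erase k) A).mul_const _) _

theorem detFDeriv_diagonal (d : κ → 𝕜) (w : κ → κ → 𝕜) :
    detFDeriv (diagonal d) w = ∑ k, (∏ l ∈ univ.erase k, d l) * w k k := by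
  rw [detFDeriv_apply (diagonal d), Fintype.sum_eq_single 1 fun σ hσ => ?_]
  · simp
  refine mul_eq_zero_of_right _ (sum_eq_zero fun k _ => mul_eq_zero_of_left ?_ _)
  obtain ⟨l, hlk, hl⟩ : ∃ l, l ≠ k ∧ σ l ≠ l := by
    by_contra! h
    exact hσ (Perm.eq_one_of_forall_ne_apply_eq h)
  exact prod_eq_zero (mem_erase.mpr ⟨hlk, mem_univ l⟩) (diagonal_apply_ne _ hl)

theorem detFDeriv2_diagonal (d : κ → 𝕜) (w v : κ → κ → 𝕜) :
    detFDeriv2 (diagonal d) w v = ∑ k, ∑ k' ∈ univ.erase k,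
      (∏ l ∈ (univ.erase k).erase k', d l) * (w k k * v k' k' - w k' k * v k k') := by
  rw [detFDeriv2_apply (diagonal d)]
  simp_rw [mul_sum]
  rw [sum_comm]
  refine sum_congr rfl fun k _ => ?_
  rw [sum_comm]
  refine sum_congr rfl fun k' hk' => ?_
  have hkk' : k ≠ k' := (ne_of_mem_erase hk').symm
  rw [Fintype.sum_eq_add 1 (swap k k') (by simpa [eq_comm] using hkk') fun σ hσ => ?_]
  · have hswap : ∏ l ∈ (univ.erase k).erase k', diagonal d (swap k k' l) l =
        ∏ l ∈ (univ.erase k).erase k', d l := prod_congr rfl fun l hl => by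
      rw [swap_apply_of_ne_of_ne (ne_of_mem_erase (mem_of_mem_erase hl)) (ne_of_mem_erase hl),
        diagonal_apply_eq]
    simp only [Perm.sign_one, Units.val_one, Int.cast_one, Perm.coe_one, id_eq,
      diagonal_apply_eq, one_mul, Perm.sign_swap hkk', Units.val_neg, Int.reduceNeg, Int.cast_neg,
      swap_apply_left, hswap, swap_apply_right, neg_mul]
    ring
  obtain ⟨l, hlk, hlk', hl⟩ : ∃ l, l ≠ k ∧ l ≠ k' ∧ σ l ≠ l := by
    by_contra! h
    exact (Perm.eq_one_or_eq_swap_of_forall_ne_apply_eq h).elim hσ.1 hσ.2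
  refine mul_eq_zero_of_right _ (mul_eq_zero_of_right _ (mul_eq_zero_of_left ?_ _))
  exact prod_eq_zero (mem_erase.mpr ⟨hlk', mem_erase.mpr ⟨hlk, mem_univ l⟩⟩)
    (diagonal_apply_ne _ hl)

end DetDerivative

section FinsetSums

variable {ι : Type*} [DecidableEq ι]

theorem sum_powersetCard_succ_ite_mem {M : Type*} [AddCommMonoid M] {u : Finset ι} {a : ι}
    (ha : a ∈ u) (k : ℕ) (f : Finset ι → M) :
    ∑ s ∈ u.powersetCard (k + 1), (if a ∈ s then f (s.erase a) else 0) =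
      ∑ t ∈ (u.erase a).powersetCard k, f t := by
  have hnot : ∀ t ∈ (u.erase a).powersetCard k, a ∉ t := fun t ht hat =>
    notMem_erase a u ((mem_powersetCard.mp ht).1 hat)
  have himage : (u.powersetCard (k + 1)).filter (a ∈ ·) =
      ((u.erase a).powersetCard k).image (insert a) := by
    ext s
    simp only [mem_filter, mem_powersetCard, mem_image]
    constructor
    · rintro ⟨⟨hsu, hcard⟩, has⟩
      refine ⟨s.erase a, ⟨fun x hx => ?_, ?_⟩, insert_erase has⟩
      · exact mem_erase.mpr ⟨ne_of_mem_erase hx, hsu (mem_of_mem_erase hx)⟩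
      · rw [card_erase_of_mem has, hcard, Nat.add_sub_cancel]
    · rintro ⟨t, ⟨htu, hcard⟩, rfl⟩
      have hat : a ∉ t := fun h => notMem_erase a u (htu h)
      exact ⟨⟨insert_subset ha (htu.trans (erase_subset a u)),
        by rw [card_insert_of_notMem hat, hcard]⟩, mem_insert_self a t⟩
  rw [← sum_filter, himage, sum_image fun t ht t' ht' h => by
    rw [← erase_insert (hnot t ht), h, erase_insert (hnot t' ht')]]
  exact sum_congr rfl fun t ht => by rw [erase_insert (hnot t ht)]

theorem sum_powersetCard_ite_mem_mem {u : Finset ι} {a b : ι} (ha : a ∈ u) (hb : b ∈ u)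
    (hab : a ≠ b) (m : ℕ) (lam : ι → ℝ) :
    ∑ s ∈ u.powersetCard m, (if a ∈ s ∧ b ∈ s then ∏ l ∈ (s.erase a).erase b, lam l else 0) =
      sigmaEIntOn ((u.erase a).erase b) ((m : ℤ) - 2) lam := by
  rcases m with _ | k
  · simp [sigmaEIntOn]
  have hb' : b ∈ u.erase a := mem_erase.mpr ⟨hab.symm, hb⟩
  have hsummand : ∀ s : Finset ι,
      (if a ∈ s ∧ b ∈ s then ∏ l ∈ (s.erase a).erase b, lam l else 0) =
        if a ∈ s then (if b ∈ s.erase a then ∏ l ∈ (s.erase a).erase b, lam l else 0) else 0 :=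
    fun s => by simp [ite_and, hab.symm]
  simp only [hsummand]
  rw [sum_powersetCard_succ_ite_mem ha k (fun t => if b ∈ t then ∏ l ∈ t.erase b, lam l else 0)]
  rcases k with _ | k
  · simp [sigmaEIntOn]
  rw [sum_powersetCard_succ_ite_mem hb' k (fun t => ∏ l ∈ t, lam l), sigmaEIntOn,
    if_pos (by omega), show ((k + 1 + 1 : ℕ) : ℤ) - 2 = k by omega, Int.toNat_natCast]
  rfl

theorem prod_erase_erase_attach {M : Type*} [CommMonoid M] {s : Finset ι} (f : ι → M)
    (k k' : s) : ∏ l ∈ (s.attach.erase k).erase k', f l = ∏ l ∈ (s.erase k).erase k', f l := by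
  rw [← Function.Embedding.coe_subtype, ← prod_map]
  simp [map_erase, attach_map_val]

theorem sum_sum_erase_ite_eq {M : Type*} [AddCommMonoid M] (s : Finset ι) (f : ι → ι → M)
    (a b : ι) :
    ∑ x ∈ s, ∑ y ∈ s.erase x, (if x = a ∧ y = b then f x y else 0) =
      if a ∈ s ∧ b ∈ s ∧ a ≠ b then f a b else 0 := by
  simp only [ite_and, sum_ite_irrel, sum_ite_eq', mem_erase, ne_eq, ite_not, sum_const_zero]
  grind

theorem single_single_apply {R : Type*} [Zero R] (i j x y : ι) (c : R) :
    (Pi.single i (Pi.single j c) : ι → ι → R) x y = if x = i ∧ y = j then c else 0 := by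
  by_cases h : x = i <;> simp [h, Pi.single_apply]

theorem sum_sum_erase_mul_single_single (s : Finset ι) (g : ι → ι → ℝ) (p q i j : ι) :
    ∑ x ∈ s, ∑ y ∈ s.erase x, g x y *
      (E[p, q] x x * E[i, j] y y - E[p, q] y x * E[i, j] x y) =
      (if i = j ∧ p = q ∧ i ≠ p then (if p ∈ s ∧ i ∈ s then g p i else 0) else 0) -
        (if p = j ∧ q = i ∧ i ≠ j then (if i ∈ s ∧ j ∈ s then g i j else 0) else 0) := by
  have h₁ : ∀ x y, g x y * (E[p, q] x x * E[i, j] y y) =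
        if x = p ∧ y = i then (if p = q ∧ i = j then g x y else 0) else 0 := fun x y => by
    simp only [single_single_apply]
    split_ifs <;> grind
  have h₂ : ∀ x y, g x y * (E[p, q] y x * E[i, j] x y) =
        if x = i ∧ y = j then (if p = j ∧ q = i then g x y else 0) else 0 := fun x y => by
    simp only [single_single_apply]
    split_ifs <;> grind
  simp only [mul_sub, sum_sub_distrib, h₁, h₂, sum_sum_erase_ite_eq]
  grind

end FinsetSums

section EmatrixDerivative

variable {ι : Type*} [Fintype ι] [DecidableEq ι] (m : ℕ)

local notation:max "restrict " s:max => submatrixCLM (𝕜 := ℝ) (Subtype.val : {x // x ∈ s} → _)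

theorem hasFDerivAt_Ematrix (A : ι → ι → ℝ) :
    HasFDerivAt (fun B : ι → ι → ℝ => Ematrix m (of B))
      (∑ s ∈ univ.powersetCard m, (detFDeriv (restrict s A)).comp (restrict s)) A :=
  HasFDerivAt.fun_sum fun s _ => (hasFDerivAt_det _).comp A (restrict s).hasFDerivAt

theorem fderiv_Ematrix_apply (A w : ι → ι → ℝ) :
    fderiv ℝ (fun B : ι → ι → ℝ => Ematrix m (of B)) A w =
      ∑ s ∈ univ.powersetCard m, detFDeriv (restrict s A) (restrict s w) := by
  simp [(hasFDerivAt_Ematrix m A).fderiv]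

theorem hasFDerivAt_fderiv_Ematrix (A w : ι → ι → ℝ) :
    HasFDerivAt (fun B => fderiv ℝ (fun B : ι → ι → ℝ => Ematrix m (of B)) B w)
      (∑ s ∈ univ.powersetCard m, (detFDeriv2 (restrict s A) (restrict s w)).comp (restrict s))
      A := by
  simp only [fderiv_Ematrix_apply]
  exact HasFDerivAt.fun_sum fun s _ =>
    (hasFDerivAt_detFDeriv (restrict s A) (restrict s w)).comp A (restrict s).hasFDerivAt

theorem fderiv_Ematrix_diagonal (lam : ι → ℝ) (w : ι → ι → ℝ) :
    fderiv ℝ (fun B : ι → ι → ℝ => Ematrix m (of B)) (diagonal lam) w =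
      ∑ s ∈ univ.powersetCard m, ∑ x ∈ s, (∏ l ∈ s.erase x, lam l) * w x x := by
  rw [fderiv_Ematrix_apply m (diagonal lam) w]
  refine sum_congr rfl fun s _ => ?_
  rw [submatrixCLM_diagonal Subtype.val_injective lam, detFDeriv_diagonal, univ_eq_attach,
    ← sum_attach s]
  simp [prod_erase_attach]

theorem fderiv_fderiv_Ematrix_diagonal (lam : ι → ℝ) (w v : ι → ι → ℝ) :
    fderiv ℝ (fun B => fderiv ℝ (fun B : ι → ι → ℝ => Ematrix m (of B)) B w) (diagonal lam) v =
      ∑ s ∈ univ.powersetCard m, ∑ x ∈ s, ∑ y ∈ s.erase x,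
        (∏ l ∈ (s.erase x).erase y, lam l) * (w x x * v y y - w y x * v x y) := by
  rw [(hasFDerivAt_fderiv_Ematrix m (diagonal lam) w).fderiv]
  simp only [_root_.sum_apply, ContinuousLinearMap.comp_apply]
  refine sum_congr rfl fun s _ => ?_
  rw [submatrixCLM_diagonal Subtype.val_injective lam, detFDeriv2_diagonal, univ_eq_attach,
    ← sum_attach s]
  refine sum_congr rfl fun x _ => ?_
  simp only [Function.comp_apply, submatrixCLM_apply, prod_erase_erase_attach]
  exact sum_erase_attach (fun y => (∏ l ∈ (s.erase x).erase y, lam l) *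
    (w x x * v y y - w y x * v x y)) x

theorem fderiv_Ematrix_diagonal_single_self (hm : 1 ≤ m) (lam : ι → ℝ) (i : ι) :
    fderiv ℝ (fun B : ι → ι → ℝ => Ematrix m (of B)) (diagonal lam) E[i, i]
      = sigmaEOn (univ.erase i) (m - 1) lam := by
  obtain ⟨k, rfl⟩ := Nat.exists_eq_add_of_le' hm
  simp only [fderiv_Ematrix_diagonal, single_single_apply, and_self, mul_ite, mul_one, mul_zero,
    sum_ite_eq']
  exact sum_powersetCard_succ_ite_mem (mem_univ i) k (fun t => ∏ l ∈ t, lam l)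

theorem fderiv_Ematrix_diagonal_single_of_ne (lam : ι → ℝ) {i j : ι} (hij : i ≠ j) :
    fderiv ℝ (fun B : ι → ι → ℝ => Ematrix m (of B)) (diagonal lam) E[i, j] = 0 := by
  refine (fderiv_Ematrix_diagonal m lam _).trans
    (sum_eq_zero fun s _ => sum_eq_zero fun x _ => ?_)
  rw [single_single_apply, if_neg fun h => hij (h.1.symm.trans h.2), mul_zero]

theorem fderiv_fderiv_Ematrix_diagonal_single (lam : ι → ℝ) (p q i j : ι) :
    fderiv ℝ (fun B => fderiv ℝ (fun B : ι → ι → ℝ => Ematrix m (of B)) B E[p, q])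
        (diagonal lam) E[i, j] =
      (if i = j ∧ p = q ∧ i ≠ p then sigmaEIntOn ((univ.erase p).erase i) ((m : ℤ) - 2) lam
        else 0) -
      (if p = j ∧ q = i ∧ i ≠ j then sigmaEIntOn ((univ.erase i).erase j) ((m : ℤ) - 2) lam
        else 0) := by
  simp only [fderiv_fderiv_Ematrix_diagonal, sum_sum_erase_mul_single_single, sum_sub_distrib,
    sum_ite_irrel, sum_const_zero]
  congr 1
  · split_ifs with h
    exacts [sum_powersetCard_ite_mem_mem (mem_univ p) (mem_univ i) (Ne.symm h.2.2) m lam, rfl]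
  · split_ifs with h
    exacts [sum_powersetCard_ite_mem_mem (mem_univ i) (mem_univ j) h.2.2 m lam, rfl]

end EmatrixDerivative

theorem Ematrix_partials_at_diagonal_general (n m : ℕ) (hm1 : 1 ≤ m)
    (lam : Fin n → ℝ) :
    (∀ i : Fin n,
        fderiv ℝ (Efun n m) (diagFun n lam) (Pi.single i (Pi.single i 1))
          = sigmaEOn (Finset.univ.erase i) (m - 1) lam) ∧
    (∀ i j : Fin n, i ≠ j →
        fderiv ℝ (Efun n m) (diagFun n lam) (Pi.single i (Pi.single j 1)) = 0) ∧
    (∀ i j : Fin n, i ≠ j →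
        fderiv ℝ (fun B : Fin n → Fin n → ℝ =>
            fderiv ℝ (Efun n m) B (Pi.single j (Pi.single j 1)))
          (diagFun n lam) (Pi.single i (Pi.single i 1))
          = sigmaEIntOn ((Finset.univ.erase i).erase j) ((m : ℤ) - 2) lam) ∧
    (∀ i j : Fin n, i ≠ j →
        fderiv ℝ (fun B : Fin n → Fin n → ℝ =>
            fderiv ℝ (Efun n m) B (Pi.single j (Pi.single i 1)))
          (diagFun n lam) (Pi.single i (Pi.single j 1))
          = -sigmaEIntOn ((Finset.univ.erase i).erase j) ((m : ℤ) - 2) lam) ∧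
    (∀ i j p q : Fin n,
        ¬(i = j ∧ p = q ∧ i ≠ p) → ¬(p = j ∧ q = i ∧ i ≠ j) →
        fderiv ℝ (fun B : Fin n → Fin n → ℝ =>
            fderiv ℝ (Efun n m) B (Pi.single p (Pi.single q 1)))
          (diagFun n lam) (Pi.single i (Pi.single j 1)) = 0) := by
  have hdiag : diagFun n lam = diagonal lam := rfl
  have hE : Efun n m = fun B => Ematrix m (of B) := rfl
  simp only [hdiag, hE]
  refine ⟨fderiv_Ematrix_diagonal_single_self m hm1 lam,
    fun i j => fderiv_Ematrix_diagonal_single_of_ne m lam, fun i j hij => ?_, fun i j hij => ?_,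
    fun i j p q h₁ h₂ => ?_⟩
  · rw [fderiv_fderiv_Ematrix_diagonal_single, if_pos ⟨rfl, rfl, hij⟩,
      if_neg fun h => hij h.2.1.symm, sub_zero, erase_right_comm]
  · rw [fderiv_fderiv_Ematrix_diagonal_single, if_neg fun h => hij h.1,
      if_pos ⟨rfl, rfl, hij⟩, zero_sub]
  · rw [fderiv_fderiv_Ematrix_diagonal_single, if_neg h₁, if_neg h₂, sub_zero]

/-- the first and second partial derivatives of `E_m` with respect to
the matrix entries, evaluated at a diagonal matrix `A` with diagonal `λ`. -/
theorem Ematrix_partials_at_diagonal (n m : ℕ) (hm1 : 1 ≤ m) (hmn : m ≤ n)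
    (lam : Fin n → ℝ) :
    (∀ i : Fin n,
        fderiv ℝ (Efun n m) (diagFun n lam) (Pi.single i (Pi.single i 1))
          = sigmaEOn (Finset.univ.erase i) (m - 1) lam) ∧
    (∀ i j : Fin n, i ≠ j →
        fderiv ℝ (Efun n m) (diagFun n lam) (Pi.single i (Pi.single j 1)) = 0) ∧
    (∀ i j : Fin n, i ≠ j →
        fderiv ℝ (fun B : Fin n → Fin n → ℝ =>
            fderiv ℝ (Efun n m) B (Pi.single j (Pi.single j 1)))
          (diagFun n lam) (Pi.single i (Pi.single i 1))
          = sigmaEIntOn ((Finset.univ.erase i).erase j) ((m : ℤ) - 2) lam) ∧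
    (∀ i j : Fin n, i ≠ j →
        fderiv ℝ (fun B : Fin n → Fin n → ℝ =>
            fderiv ℝ (Efun n m) B (Pi.single j (Pi.single i 1)))
          (diagFun n lam) (Pi.single i (Pi.single j 1))
          = -sigmaEIntOn ((Finset.univ.erase i).erase j) ((m : ℤ) - 2) lam) ∧
    (∀ i j p q : Fin n,
        ¬(i = j ∧ p = q ∧ i ≠ p) → ¬(p = j ∧ q = i ∧ i ≠ j) →
        fderiv ℝ (fun B : Fin n → Fin n → ℝ =>
            fderiv ℝ (Efun n m) B (Pi.single p (Pi.single q 1)))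
          (diagFun n lam) (Pi.single i (Pi.single j 1)) = 0) :=
  Ematrix_partials_at_diagonal_general n m hm1 lam
end

section
/- Let n ≥ 2 and 1 ≤ p ≤ n be integers, let s ≥ 0 be real, let κ ∈ ℝ^n with κ_1 = 1, and let (g_I)_{I ∈ J(p,n)} be nonnegative reals. Set Λ_I = ∑_{i∈I} κ_i and F^{ii} = ∑_{I ∋ i} g_I. Then s · ∑_{i=2}^n F^{ii} + ∑_{i=2}^n F^{ii} (κ_i − 1)² ≥ (1/p) ∑_I g_I Λ_I² − 2 ∑_I g_I Λ_I + (p−1)(1+s) ∑_I g_I + ∑_I g_I + s ∑_{I : 1 ∉ I} g_I. -/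
/-!
Writing `Λ_I = p + D_I` with `D_I = ∑_{i ∈ I} (κ_i - 1)`, the `I`-th term of the left-hand side
is `g_I (D_I² / p + s |I ∖ {1}|)`. Cauchy–Schwarz gives `D_I² / p ≤ ∑_{i ∈ I} (κ_i - 1)²`, and the
summand `i = 1` vanishes since `κ_1 = 1`; summing over `I` and exchanging the order of summation
turns `∑_I g_I |I ∖ {1}|` and `∑_I g_I ∑_{i ∈ I ∖ {1}} (κ_i - 1)²` into the two sums of `F^{ii}`.
-/

open Finset

section

variable {ι : Type*}

theorem sq_sum_div_card_sub_two_mul_sum_add_card_le (t : Finset ι) (x : ι → ℝ) :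
    (∑ i ∈ t, x i) ^ 2 / #t - 2 * ∑ i ∈ t, x i + #t ≤ ∑ i ∈ t, (x i - 1) ^ 2 := by
  obtain rfl | ht := t.eq_empty_or_nonempty
  · simp
  have hcard : (0 : ℝ) < #t := by exact_mod_cast ht.card_pos
  have hshift : ∑ i ∈ t, (x i - 1) = ∑ i ∈ t, x i - #t := by simp [sum_sub_distrib]
  calc (∑ i ∈ t, x i) ^ 2 / #t - 2 * ∑ i ∈ t, x i + #t
      = (∑ i ∈ t, (x i - 1)) ^ 2 / #t := by rw [hshift]; field_simp; ring
    _ ≤ ∑ i ∈ t, (x i - 1) ^ 2 := by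
      rw [div_le_iff₀' hcard]
      exact sq_sum_le_card_mul_sum_sq

variable [DecidableEq ι]

theorem card_sub_one_add_ite_eq_card_erase (t : Finset ι) (a : ι) :
    (#t : ℝ) - 1 + (if a ∈ t then 0 else 1) = #(t.erase a) := by
  split_ifs with ha
  · rw [← card_erase_add_one ha]; push_cast; ring
  · rw [erase_eq_of_notMem ha]; ring

theorem sum_sum_filter_mem_mul {κ R : Type*} [Fintype κ] [CommSemiring R] (S : Finset ι)
    (T : κ → Finset ι) (g : κ → R) (f : ι → R) :
    ∑ i ∈ S, (∑ I ∈ univ.filter (fun I => i ∈ T I), g I) * f i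
      = ∑ I, g I * ∑ i ∈ S ∩ T I, f i := by
  simp only [sum_filter, sum_mul, ite_mul, zero_mul]
  rw [sum_comm]
  refine sum_congr rfl fun I _ => ?_
  rw [sum_ite_mem, mul_sum]

end

theorem gradient_key_inequality_general (n p : ℕ)
    (s : ℝ) (κ : Fin n → ℝ) (i0 : Fin n)
    (hκ1 : κ i0 = 1)
    (g : {t : Finset (Fin n) // t.card = p} → ℝ) (hg : ∀ I, 0 ≤ g I) :
    (1 / (p : ℝ)) * ∑ I : {t : Finset (Fin n) // t.card = p}, g I * (∑ i ∈ I.1, κ i) ^ 2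
      - 2 * ∑ I : {t : Finset (Fin n) // t.card = p}, g I * (∑ i ∈ I.1, κ i)
      + ((p : ℝ) - 1) * (1 + s) * ∑ I : {t : Finset (Fin n) // t.card = p}, g I
      + ∑ I : {t : Finset (Fin n) // t.card = p}, g I
      + s * ∑ I ∈ Finset.univ.filter
          (fun I : {t : Finset (Fin n) // t.card = p} => i0 ∉ I.1), g I
    ≤ s * ∑ i ∈ Finset.univ.erase i0,
          (∑ I ∈ Finset.univ.filter
            (fun I : {t : Finset (Fin n) // t.card = p} => i ∈ I.1), g I)
      + ∑ i ∈ Finset.univ.erase i0,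
          (∑ I ∈ Finset.univ.filter
            (fun I : {t : Finset (Fin n) // t.card = p} => i ∈ I.1), g I) * (κ i - 1) ^ 2 := by
  have hF :=
    sum_sum_filter_mem_mul (univ.erase i0) (fun I : {t : Finset (Fin n) // #t = p} => I.1) g
  simp only [erase_inter, univ_inter] at hF
  have hcount : ∑ i ∈ univ.erase i0, ∑ I with i ∈ I.1, g I
      = ∑ I, g I * #(I.1.erase i0) := by simpa using hF 1
  calc _ = ∑ I : {t : Finset (Fin n) // #t = p}, g I *
          ((∑ i ∈ I.1, κ i) ^ 2 / #I.1 - 2 * ∑ i ∈ I.1, κ i + #I.1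
            + s * ((#I.1 : ℝ) - 1 + if i0 ∈ I.1 then 0 else 1)) := by
        simp only [sum_filter, mul_sum, ← sum_sub_distrib, ← sum_add_distrib]
        refine sum_congr rfl fun I _ => ?_
        simp only [I.2, ← mul_sum]
        split_ifs <;> ring
    _ ≤ ∑ I : {t : Finset (Fin n) // #t = p}, g I *
          (∑ i ∈ I.1.erase i0, (κ i - 1) ^ 2 + s * #(I.1.erase i0)) := by
        refine sum_le_sum fun I _ => mul_le_mul_of_nonneg_left ?_ (hg I)
        rw [card_sub_one_add_ite_eq_card_erase, sum_erase _ (by simp [hκ1])]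
        linarith [sq_sum_div_card_sub_two_mul_sum_add_card_le I.1 κ]
    _ = _ := by
        rw [hcount, hF, mul_sum, ← sum_add_distrib]
        exact sum_congr rfl fun I _ => by ring

/-- the key algebraic inequality in the gradient estimate. Here
`i0` is the first index (where `κ_{i0} = 1`), `g_I ≥ 0`, `Λ_I = ∑_{i∈I} κ_i` and
`F^{ii} = ∑_{I ∋ i} g_I`. -/
theorem gradient_key_inequality (n p : ℕ) (hn : 2 ≤ n) (hp1 : 1 ≤ p) (hpn : p ≤ n)
    (s : ℝ) (hs : 0 ≤ s) (κ : Fin n → ℝ) (i0 : Fin n) (hi0 : (i0 : ℕ) = 0)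
    (hκ1 : κ i0 = 1)
    (g : {t : Finset (Fin n) // t.card = p} → ℝ) (hg : ∀ I, 0 ≤ g I) :
    (1 / (p : ℝ)) * ∑ I : {t : Finset (Fin n) // t.card = p}, g I * (∑ i ∈ I.1, κ i) ^ 2
      - 2 * ∑ I : {t : Finset (Fin n) // t.card = p}, g I * (∑ i ∈ I.1, κ i)
      + ((p : ℝ) - 1) * (1 + s) * ∑ I : {t : Finset (Fin n) // t.card = p}, g I
      + ∑ I : {t : Finset (Fin n) // t.card = p}, g I
      + s * ∑ I ∈ Finset.univ.filter
          (fun I : {t : Finset (Fin n) // t.card = p} => i0 ∉ I.1), g I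
    ≤ s * ∑ i ∈ Finset.univ.erase i0,
          (∑ I ∈ Finset.univ.filter
            (fun I : {t : Finset (Fin n) // t.card = p} => i ∈ I.1), g I)
      + ∑ i ∈ Finset.univ.erase i0,
          (∑ I ∈ Finset.univ.filter
            (fun I : {t : Finset (Fin n) // t.card = p} => i ∈ I.1), g I) * (κ i - 1) ^ 2 :=
  gradient_key_inequality_general n p s κ i0 hκ1 g hg
end
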